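/- arXiv:1711.08216 — 8 statements merged into one kernel-verified Lean document; each statement's English description precedes it below -/
import Mathlib

section
/- With notation as in the context, h^4 mod pq lies in the Ding–Helleseth class D_0. -/
/-!
Choose `s < e/4` with `s ≡ 1` modulo `(p - 1)/4` and `s ≡ 0` modulo `(q - 1)/4`, which the
Chinese remainder theorem allows since these two numbers are coprime. Then `g^(4s)` agrees
with `g^4 = h^4` modulo `p` and with `1 = h^4` modulo `q`, so `h^4 = g^(4s) · h^0 ∈ D_0`.
-/

theorem Nat.exists_lt_mul_modEq_one_and_dvd {a b : ℕ} (hab : a.Coprime b) (ha : a ≠ 0)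
    (hb : b ≠ 0) : ∃ s < a * b, s ≡ 1 [MOD a] ∧ b ∣ s :=
  let s := Nat.chineseRemainder hab 1 0
  ⟨s, Nat.chineseRemainder_lt_mul hab 1 0 ha hb, s.2.1, Nat.modEq_zero_iff_dvd.1 s.2.2⟩

theorem ZMod.natCast_eq_natCast_of_coprime {m n x y : ℕ} (hmn : m.Coprime n)
    (hm : (x : ZMod m) = y) (hn : (x : ZMod n) = y) : (x : ZMod (m * n)) = y := by
  rw [ZMod.natCast_eq_natCast_iff] at *
  exact (Nat.modEq_and_modEq_iff_modEq_mul hmn).1 ⟨hm, hn⟩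

theorem ZMod.natCast_pow_eq_pow_of_modEq {p q g h n k : ℕ} (hpq : p.Coprime q)
    (hhp : (h : ZMod p) = g) (hhq : (h : ZMod q) = 1)
    (hnp : n ≡ k [MOD orderOf (g : ZMod p)]) (hnq : orderOf (g : ZMod q) ∣ n) :
    (g : ZMod (p * q)) ^ n = (h : ZMod (p * q)) ^ k := by
  rw [← Nat.cast_pow, ← Nat.cast_pow]
  apply ZMod.natCast_eq_natCast_of_coprime hpq
  · push_cast
    rw [hhp, ← pow_mod_orderOf, hnp, pow_mod_orderOf]
  · push_cast
    rw [hhq, one_pow]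
    exact orderOf_dvd_iff_pow_eq_one.1 hnq

theorem stmt0_general
    (p q : ℕ) (hp : Nat.Prime p) (hq : Nat.Prime q) (hne : p ≠ q)
    (hgcd : Nat.gcd (p - 1) (q - 1) = 4)
    (e : ℕ) (he : e = (p - 1) * (q - 1) / 4)
    (g h : ℕ)
    (hgp : orderOf (g : ZMod p) = p - 1)
    (hgq : orderOf (g : ZMod q) = q - 1)
    (hhp : (h : ZMod p) = (g : ZMod p))
    (hhq : (h : ZMod q) = 1)
    (D : ℕ → Finset (ZMod (p * q)))
    (hD : ∀ i, D i = (Finset.range (e / 4) ×ˢ Finset.range 4).image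
        (fun sj => (g : ZMod (p * q)) ^ (4 * sj.1 + i) * (h : ZMod (p * q)) ^ sj.2))
 :
    (h : ZMod (p * q)) ^ 4 ∈ D 0 := by
  obtain ⟨a, b, hab, hpa, hqb⟩ := Nat.exists_coprime (p - 1) (q - 1)
  rw [hgcd] at hpa hqb
  have hp2 := hp.two_le
  have hq2 := hq.two_le
  have he4 : e / 4 = a * b := by
    rw [he, hpa, hqb, show a * 4 * (b * 4) = a * b * 4 * 4 by ring]
    simp
  obtain ⟨s, hs, hsa, hbs⟩ := Nat.exists_lt_mul_modEq_one_and_dvd hab (by omega) (by omega)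
  have hpow : (g : ZMod (p * q)) ^ (4 * s) = (h : ZMod (p * q)) ^ 4 := by
    refine ZMod.natCast_pow_eq_pow_of_modEq ((Nat.coprime_primes hp hq).2 hne) hhp hhq ?_ ?_
    · rw [hgp, hpa, mul_comm a]
      simpa using hsa.mul_left' 4
    · rw [hgq, hqb, mul_comm b]
      exact mul_dvd_mul_left 4 hbs
  rw [hD 0, Finset.mem_image]
  exact ⟨(s, 0), by simp [he4, hs], by simpa using hpow⟩

theorem stmt0
    (p q : ℕ) (hp : Nat.Prime p) (hq : Nat.Prime q) (hne : p ≠ q)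
    (hpo : Odd p) (hqo : Odd q)
    (hgcd : Nat.gcd (p - 1) (q - 1) = 4)
    (e : ℕ) (he : e = (p - 1) * (q - 1) / 4)
    (g h : ℕ)
    (hgp : orderOf (g : ZMod p) = p - 1)
    (hgq : orderOf (g : ZMod q) = q - 1)
    (hhp : (h : ZMod p) = (g : ZMod p))
    (hhq : (h : ZMod q) = 1)
    (D : ℕ → Finset (ZMod (p * q)))
    (hD : ∀ i, D i = (Finset.range (e / 4) ×ˢ Finset.range 4).image
        (fun sj => (g : ZMod (p * q)) ^ (4 * sj.1 + i) * (h : ZMod (p * q)) ^ sj.2))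
 :
    (h : ZMod (p * q)) ^ 4 ∈ D 0 :=
  stmt0_general p q hp hq hne hgcd e he g h hgp hgq hhp hhq D hD
end

section
/- Let γ ∈ GR(4, 4^ℓ) be a primitive pq-th root of unity. For every i with 0 ≤ i < 4 and every k with 0 ≤ k < q, one has D_i(γ^{kp}) = 0 in GR(4, 4^ℓ). -/
/-!
Put `β = γ ^ (k p)`, so that `β ^ q = 1` and `β ^ u` depends only on `u mod q`. Since `h ≡ 1 (mod q)`,
the four elements `g^(4s+i) h^j` (`0 ≤ j < 4`) of `D_i` have the same residue mod `q`, and they are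
pairwise distinct (the exponents are pinned down mod `p - 1` and mod `q - 1`, and
`4 * (e / 4) = e = lcm (p - 1) (q - 1)`). Hence `D_i(β)` is a sum of terms `4 β^c`, which vanish
because `GR(4, 4^ℓ)` has characteristic `4`.
-/

open Finset

namespace TruncatedWittVector

theorem natCast_pow_self_eq_zero (p : ℕ) [Fact p.Prime] (n : ℕ) (R : Type*) [CommRing R]
    [CharP R p] : (p : TruncatedWittVector p n R) ^ n = 0 := by
  have htrunc : (p : TruncatedWittVector p n R) ^ n =
      WittVector.truncate n ((p : WittVector p R) ^ n) := by
    rw [map_pow, map_natCast]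
  rw [htrunc]
  ext j
  rw [WittVector.coeff_truncate, coeff_zero]
  exact WittVector.coeff_p_pow_eq_zero p R j.2.ne

end TruncatedWittVector

theorem pow_val_eq_pow_val_castHom {M : Type*} [Monoid M] {x : M} {m n : ℕ} [NeZero n]
    (hmn : m ∣ n) (hx : x ^ m = 1) (u : ZMod n) :
    x ^ u.val = x ^ (ZMod.castHom hmn (ZMod m) u).val := by
  rw [ZMod.castHom_apply, ZMod.cast_eq_val, ZMod.val_natCast, ← pow_eq_pow_mod _ hx]

theorem Nat.ModEq.lcm {a b m n : ℕ} (hm : a ≡ b [MOD m]) (hn : a ≡ b [MOD n]) :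
    a ≡ b [MOD Nat.lcm m n] := by
  rw [← Int.natCast_modEq_iff] at *
  simpa using Int.modEq_and_modEq_iff_modEq_lcm.mp ⟨hm, hn⟩

theorem injOn_dingHelleseth {p q g h i : ℕ} (hp : 1 < p) (hq : 1 < q)
    (hgcd : Nat.gcd (p - 1) (q - 1) = 4)
    (hgp : orderOf (g : ZMod p) = p - 1) (hgq : orderOf (g : ZMod q) = q - 1)
    (hhp : (h : ZMod p) = (g : ZMod p)) (hhq : (h : ZMod q) = 1) :
    Set.InjOn (fun sj : ℕ × ℕ => (g : ZMod (p * q)) ^ (4 * sj.1 + i) * (h : ZMod (p * q)) ^ sj.2)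
      (range (Nat.lcm (p - 1) (q - 1) / 4) ×ˢ range 4 : Finset (ℕ × ℕ)) := by
  rintro ⟨s, j⟩ hsj ⟨s', j'⟩ hsj' heq
  simp only [coe_product, coe_range, Set.mem_prod, Set.mem_Iio] at hsj hsj'
  have hmodq : 4 * s + i ≡ 4 * s' + i [MOD q - 1] := by
    have := congrArg (ZMod.castHom (dvd_mul_left q p) (ZMod q)) heq
    simp only [map_mul, map_pow, map_natCast, hhq, one_pow, mul_one] at this
    exact hgq ▸ (orderOf_pos_iff.mp (by omega)).pow_eq_pow_iff_modEq.mp this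
  have hmodp : 4 * s + i + j ≡ 4 * s' + i + j' [MOD p - 1] := by
    have := congrArg (ZMod.castHom (dvd_mul_right p q) (ZMod p)) heq
    simp only [map_mul, map_pow, map_natCast, hhp, ← pow_add] at this
    exact hgp ▸ (orderOf_pos_iff.mp (by omega)).pow_eq_pow_iff_modEq.mp this
  obtain rfl : j = j' := by
    have := hmodp.of_dvd (hgcd ▸ Nat.gcd_dvd_left _ _)
    unfold Nat.ModEq at this
    omega
  have hmodlcm : 4 * s ≡ 4 * s' [MOD Nat.lcm (p - 1) (q - 1)] :=
    (Nat.ModEq.add_right_cancel' (i + j) (by simpa only [add_assoc] using hmodp)).lcm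
      (Nat.ModEq.add_right_cancel' i hmodq)
  obtain rfl : s = s' := by
    have := hmodlcm.eq_of_lt_of_lt (by omega) (by omega)
    omega
  rfl

theorem stmt4_general
    (p q : ℕ) (hp : Nat.Prime p) (hq : Nat.Prime q)
    (hgcd : Nat.gcd (p - 1) (q - 1) = 4)
    (e : ℕ) (he : e = (p - 1) * (q - 1) / 4)
    (g h : ℕ)
    (hgp : orderOf (g : ZMod p) = p - 1)
    (hgq : orderOf (g : ZMod q) = q - 1)
    (hhp : (h : ZMod p) = (g : ZMod p))
    (hhq : (h : ZMod q) = 1)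
    (D : ℕ → Finset (ZMod (p * q)))
    (hD : ∀ i, D i = (Finset.range (e / 4) ×ˢ Finset.range 4).image
        (fun sj => (g : ZMod (p * q)) ^ (4 * sj.1 + i) * (h : ZMod (p * q)) ^ sj.2))
    (ℓ : ℕ) (γ : TruncatedWittVector 2 2 (GaloisField 2 ℓ))
    (hγo : orderOf γ = p * q)
 :
    ∀ i < 4, ∀ k < q, ∑ u ∈ D i, (γ ^ (k * p)) ^ u.val = 0 := by
  intro i _ k _
  have : NeZero (p * q) := ⟨Nat.mul_ne_zero hp.ne_zero hq.ne_zero⟩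
  have hβ : (γ ^ (k * p)) ^ q = 1 := by
    rw [← pow_mul, mul_assoc, mul_comm k, pow_mul, ← hγo, pow_orderOf_eq_one, one_pow]
  have he_lcm : e = Nat.lcm (p - 1) (q - 1) := by
    rw [he, ← Nat.gcd_mul_lcm, hgcd, Nat.mul_div_cancel_left _ four_pos]
  have hfour : (4 : TruncatedWittVector 2 2 (GaloisField 2 ℓ)) = 0 := by
    simpa [show (2 : TruncatedWittVector 2 2 (GaloisField 2 ℓ)) ^ 2 = 4 by norm_num] using
      TruncatedWittVector.natCast_pow_self_eq_zero 2 2 (GaloisField 2 ℓ)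
  rw [hD i, sum_image (he_lcm ▸ injOn_dingHelleseth hp.one_lt hq.one_lt hgcd hgp hgq hhp hhq),
    sum_product]
  refine sum_eq_zero fun s _ => ?_
  have hconst (j : ℕ) :
      (γ ^ (k * p)) ^ ((g : ZMod (p * q)) ^ (4 * s + i) * (h : ZMod (p * q)) ^ j).val =
        (γ ^ (k * p)) ^ ((g : ZMod q) ^ (4 * s + i)).val := by
    rw [pow_val_eq_pow_val_castHom (dvd_mul_left q p) hβ]
    simp [hhq]
  rw [sum_congr rfl fun j _ => hconst j, sum_const, card_range, nsmul_eq_mul, Nat.cast_ofNat,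
    hfour, zero_mul]

theorem stmt4
    (p q : ℕ) (hp : Nat.Prime p) (hq : Nat.Prime q) (hne : p ≠ q)
    (hpo : Odd p) (hqo : Odd q)
    (hgcd : Nat.gcd (p - 1) (q - 1) = 4)
    (e : ℕ) (he : e = (p - 1) * (q - 1) / 4)
    (g h : ℕ)
    (hgp : orderOf (g : ZMod p) = p - 1)
    (hgq : orderOf (g : ZMod q) = q - 1)
    (hhp : (h : ZMod p) = (g : ZMod p))
    (hhq : (h : ZMod q) = 1)
    (D : ℕ → Finset (ZMod (p * q)))
    (hD : ∀ i, D i = (Finset.range (e / 4) ×ˢ Finset.range 4).image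
        (fun sj => (g : ZMod (p * q)) ^ (4 * sj.1 + i) * (h : ZMod (p * q)) ^ sj.2))
    (ℓ : ℕ) (γ : TruncatedWittVector 2 2 (GaloisField 2 ℓ))
    (hγu : IsUnit γ) (hγo : orderOf γ = p * q)
 :
    ∀ i < 4, ∀ k < q, ∑ u ∈ D i, (γ ^ (k * p)) ^ u.val = 0 :=
  stmt4_general p q hp hq hgcd e he g h hgp hgq hhp hhq D hD ℓ γ hγo
end

section
/- For every a with 0 ≤ a < 4, the number of elements w ∈ D_0 satisfying g^a + w ≡ 0 (mod p) is exactly (q-1)/4. -/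
/-!
Reducing modulo `p` and `q` sends `g ^ (4 s) * h ^ j` to `g ^ (4 s + j)` and `g ^ (4 s)`. Write
`p - 1 = 4 m` and `q - 1 = 4 k`, so that `gcd m k = 1` and `e / 4 = m k`. As `g` has order `4 m`
modulo `p` and `4 k` modulo `q`, these two residues determine `j < 4` and `s` modulo both `m` and
`k`, hence `s < m k`: the parametrisation of `D 0` is injective. Since `g ^ (2 m) = -1` modulo
`p`, the condition `g ^ a + w ≡ 0 (mod p)` becomes `4 s + j ≡ 2 m + a (mod 4 m)`, and as
`4 s + j` runs once through `[0, 4 m k)`, exactly `k = (q - 1) / 4` of its values satisfy it.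
-/

open Finset

namespace Nat

theorem card_filter_range_mul_modEq {r : ℕ} (hr : 0 < r) (k v : ℕ) :
    #{n ∈ range (r * k) | n ≡ v [MOD r]} = k := by
  rw [← count_eq_card_filter_range, count_modEq_card _ hr, Nat.mul_div_cancel_left _ hr,
    Nat.mul_mod_right]
  simp

theorem card_filter_range_prod_range (N b : ℕ) (P : ℕ → Prop) [DecidablePred P] :
    #{x ∈ range N ×ˢ range b | P (b * x.1 + x.2)} = #{n ∈ range (b * N) | P n} := by
  refine card_nbij' (fun x => b * x.1 + x.2) (fun n => (n / b, n % b)) ?_ ?_ ?_ ?_ <;>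
    simp only [Set.MapsTo, Set.LeftInvOn, coe_filter, mem_product, mem_range, Set.mem_ofPred_eq]
  · rintro ⟨s, j⟩ ⟨⟨hs, hj⟩, hP⟩
    exact ⟨by nlinarith, hP⟩
  · rintro n ⟨hn, hP⟩
    have hb : 0 < b := Nat.pos_of_ne_zero (by rintro rfl; simp at hn)
    exact ⟨⟨Nat.div_lt_of_lt_mul hn, Nat.mod_lt _ hb⟩, by rwa [Nat.div_add_mod]⟩
  · rintro ⟨s, j⟩ ⟨⟨-, hj⟩, -⟩
    have hb : 0 < b := by omega
    simp [Nat.mul_add_div hb, Nat.div_eq_of_lt hj, Nat.mod_eq_of_lt hj]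
  · exact fun n _ => Nat.div_add_mod n b

theorem mul_add_modEq_mul_add_iff {b m s s' j j' : ℕ} (hj : j < b) (hj' : j' < b) :
    b * s + j ≡ b * s' + j' [MOD b * m] ↔ j = j' ∧ s ≡ s' [MOD m] := by
  refine ⟨fun h => ?_, fun ⟨hjj', hss'⟩ => hjj' ▸ (hss'.mul_left' b).add_right j⟩
  have hjj' : j = j' := by
    have := h.of_mul_right m
    unfold Nat.ModEq at this
    rwa [Nat.mul_add_mod, Nat.mul_add_mod, Nat.mod_eq_of_lt hj, Nat.mod_eq_of_lt hj'] at this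
  subst hjj'
  exact ⟨rfl, (Nat.ModEq.add_right_cancel' j h).mul_left_cancel' (by omega)⟩

theorem eq_of_mul_add_modEq_of_mul_modEq {b m k s s' j j' : ℕ} (hmk : m.Coprime k)
    (hs : s < m * k) (hs' : s' < m * k) (hj : j < b) (hj' : j' < b)
    (hm : b * s + j ≡ b * s' + j' [MOD b * m]) (hk : b * s ≡ b * s' [MOD b * k]) :
    s = s' ∧ j = j' := by
  obtain ⟨hjj', hsm⟩ := (mul_add_modEq_mul_add_iff hj hj').mp hm
  have hsk : s ≡ s' [MOD k] := hk.mul_left_cancel' (by omega)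
  exact ⟨((modEq_and_modEq_iff_modEq_mul hmk).mp ⟨hsm, hsk⟩).eq_of_lt_of_lt hs hs', hjj'⟩

end Nat

section PowMulPow

variable {M A B F F' : Type*} [Monoid M] [Monoid A] [Monoid B]
  [FunLike F M A] [MonoidHomClass F M A] [FunLike F' M B] [MonoidHomClass F' M B]
  {π : F} {ρ : F'} {G H : M}

theorem map_pow_mul_pow_of_map_eq (hH : π H = π G) (n j : ℕ) :
    π (G ^ n * H ^ j) = π G ^ (n + j) := by
  rw [map_mul, map_pow, map_pow, hH, pow_add]

theorem map_pow_mul_pow_of_map_eq_one (hH : ρ H = 1) (n j : ℕ) :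
    ρ (G ^ n * H ^ j) = ρ G ^ n := by
  rw [map_mul, map_pow, map_pow, hH, one_pow, mul_one]

theorem injOn_pow_mul_pow {b m k : ℕ} (hπH : π H = π G) (hρH : ρ H = 1) (hmk : m.Coprime k)
    (hπG : orderOf (π G) = b * m) (hρG : orderOf (ρ G) = b * k) :
    Set.InjOn (fun x : ℕ × ℕ => G ^ (b * x.1) * H ^ x.2)
      (↑(range (m * k) ×ˢ range b) : Set (ℕ × ℕ)) := by
  rintro ⟨s, j⟩ hx ⟨s', j'⟩ hx' hxx'
  simp only [mem_coe, mem_product, mem_range] at hx hx' hxx'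
  have hb : 0 < b := by omega
  have hm : 0 < m := Nat.pos_of_mul_pos_right (by omega : 0 < m * k)
  have hk : 0 < k := Nat.pos_of_mul_pos_left (by omega : 0 < m * k)
  have hπ := congrArg π hxx'
  have hρ := congrArg ρ hxx'
  rw [map_pow_mul_pow_of_map_eq hπH, map_pow_mul_pow_of_map_eq hπH,
    (orderOf_pos_iff.mp (by rw [hπG]; positivity)).pow_eq_pow_iff_modEq, hπG] at hπ
  rw [map_pow_mul_pow_of_map_eq_one hρH, map_pow_mul_pow_of_map_eq_one hρH,
    (orderOf_pos_iff.mp (by rw [hρG]; positivity)).pow_eq_pow_iff_modEq, hρG] at hρ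
  obtain ⟨rfl, rfl⟩ := Nat.eq_of_mul_add_modEq_of_mul_modEq hmk hx.1 hx'.1 hx.2 hx'.2 hπ hρ
  rfl

theorem card_filter_map_pow_mul_pow_eq [DecidableEq A] {b m : ℕ} (hb : 0 < b) (hm : 0 < m)
    (hπH : π H = π G) (hπG : orderOf (π G) = b * m) (k c : ℕ) :
    #{x ∈ range (m * k) ×ˢ range b | π (G ^ (b * x.1) * H ^ x.2) = π G ^ c} = k := by
  simp_rw [map_pow_mul_pow_of_map_eq hπH,
    (orderOf_pos_iff.mp (by rw [hπG]; positivity)).pow_eq_pow_iff_modEq, hπG]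
  rw [Nat.card_filter_range_prod_range _ _ (· ≡ c [MOD b * m]), ← mul_assoc,
    Nat.card_filter_range_mul_modEq (by positivity)]

end PowMulPow

theorem stmt6_general
    (p q : ℕ) (hp : Nat.Prime p)
    (hgcd : Nat.gcd (p - 1) (q - 1) = 4)
    (e : ℕ) (he : e = (p - 1) * (q - 1) / 4)
    (g h : ℕ)
    (hgp : orderOf (g : ZMod p) = p - 1)
    (hgq : orderOf (g : ZMod q) = q - 1)
    (hhp : (h : ZMod p) = (g : ZMod p))
    (hhq : (h : ZMod q) = 1)
    (D : ℕ → Finset (ZMod (p * q)))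
    (hD : ∀ i, D i = (Finset.range (e / 4) ×ˢ Finset.range 4).image
        (fun sj => (g : ZMod (p * q)) ^ (4 * sj.1 + i) * (h : ZMod (p * q)) ^ sj.2))
 :
    ∀ a < 4,
      ((D 0).filter (fun w =>
        (g : ZMod p) ^ a + ZMod.castHom (dvd_mul_right p q) (ZMod p) w = 0)).card
      = (q - 1) / 4 := by
  intro a _
  have := Fact.mk hp
  obtain ⟨m, hm⟩ : 4 ∣ p - 1 := hgcd ▸ Nat.gcd_dvd_left _ _
  obtain ⟨k, hk⟩ : 4 ∣ q - 1 := hgcd ▸ Nat.gcd_dvd_right _ _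
  have hm0 : 0 < m := by have := hp.two_le; omega
  have hmk : m.Coprime k := by
    rw [hm, hk, Nat.gcd_mul_left] at hgcd
    exact Nat.eq_of_mul_eq_mul_left (by norm_num) (hgcd.trans (mul_one 4).symm)
  have he4 : e / 4 = m * k := by
    rw [he, hm, hk, mul_mul_mul_comm, Nat.div_div_eq_div_mul,
      Nat.mul_div_cancel_left _ (by norm_num)]
  set π := ZMod.castHom (dvd_mul_right p q) (ZMod p)
  set ρ := ZMod.castHom (dvd_mul_left q p) (ZMod q)
  have hπg : π g = g := map_natCast π g
  have hπh : π h = π g := by rw [map_natCast, hhp, hπg]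
  have hρh : ρ h = 1 := by rw [map_natCast, hhq]
  have hπG : orderOf (π g) = 4 * m := by rw [hπg, hgp, hm]
  have hρG : orderOf (ρ g) = 4 * k := by rw [map_natCast, hgq, hk]
  have hneg : -(g : ZMod p) ^ a = π g ^ (2 * m + a) := by
    have hζ : IsPrimitiveRoot (π g) (2 * m * 2) := IsPrimitiveRoot.iff_orderOf.mpr (by lia)
    rw [pow_add, (hζ.pow (by omega) rfl).eq_neg_one_of_two_right, neg_one_mul, hπg]
  have hD0 := hD 0
  simp only [add_zero] at hD0
  rw [hD0, he4, filter_image, card_image_of_injOn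
    ((injOn_pow_mul_pow hπh hρh hmk hπG hρG).mono (filter_subset _ _)), hk,
    Nat.mul_div_cancel_left _ (by norm_num)]
  simp_rw [add_eq_zero_iff_eq_neg', hneg]
  exact card_filter_map_pow_mul_pow_eq (by norm_num) hm0 hπh hπG k _

theorem stmt6
    (p q : ℕ) (hp : Nat.Prime p) (hq : Nat.Prime q) (hne : p ≠ q)
    (hpo : Odd p) (hqo : Odd q)
    (hgcd : Nat.gcd (p - 1) (q - 1) = 4)
    (e : ℕ) (he : e = (p - 1) * (q - 1) / 4)
    (g h : ℕ)
    (hgp : orderOf (g : ZMod p) = p - 1)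
    (hgq : orderOf (g : ZMod q) = q - 1)
    (hhp : (h : ZMod p) = (g : ZMod p))
    (hhq : (h : ZMod q) = 1)
    (D : ℕ → Finset (ZMod (p * q)))
    (hD : ∀ i, D i = (Finset.range (e / 4) ×ˢ Finset.range 4).image
        (fun sj => (g : ZMod (p * q)) ^ (4 * sj.1 + i) * (h : ZMod (p * q)) ^ sj.2))
 :
    ∀ a < 4,
      ((D 0).filter (fun w =>
        (g : ZMod p) ^ a + ZMod.castHom (dvd_mul_right p q) (ZMod p) w = 0)).card
      = (q - 1) / 4 :=
  stmt6_general p q hp hgcd e he g h hgp hgq hhp hhq D hD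
end

section
/- For every a with 0 ≤ a < 4, the number of elements w ∈ D_0 satisfying g^a + w ≡ 0 (mod q) is exactly p-1 if 4 divides a + (q-1)/2, and is 0 otherwise. -/
theorem auxPowIff {M : Type*} [Monoid M] {x : M} (hx : orderOf x ≠ 0) (m k : ℕ) :
    x ^ m = x ^ k ↔ m ≡ k [MOD orderOf x] := by
  have hu : IsUnit x := IsUnit.of_pow_eq_one (pow_orderOf_eq_one x) hx
  obtain ⟨u, rfl⟩ := hu
  rw [← Units.val_pow_eq_pow_val, ← Units.val_pow_eq_pow_val, ← Units.ext_iff, orderOf_units]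
  exact pow_eq_pow_iff_modEq

theorem auxSurj {p : ℕ} [Fact p.Prime] (x : ZMod p) (hx : orderOf x = p - 1)
    (y : ZMod p) (hy : y ≠ 0) : ∃ t : ℕ, x ^ t = y := by
  have hp1 : p - 1 ≠ 0 := by have := (Fact.out : p.Prime).two_le; omega
  have hux : IsUnit x := IsUnit.of_pow_eq_one (hx ▸ pow_orderOf_eq_one x) hp1
  obtain ⟨u, rfl⟩ := hux
  have huy : IsUnit y := isUnit_iff_ne_zero.mpr hy
  obtain ⟨v, rfl⟩ := huy
  have hord : orderOf u = p - 1 := by rwa [orderOf_units] at hx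
  have hcard : Nat.card (Subgroup.zpowers u) = Nat.card (ZMod p)ˣ := by
    rw [Nat.card_zpowers, hord, Nat.card_eq_fintype_card, ZMod.card_units_eq_totient,
      Nat.totient_prime (Fact.out : p.Prime)]
  have htop : Subgroup.zpowers u = ⊤ := Subgroup.eq_top_of_card_eq _ hcard
  have hv : v ∈ Subgroup.zpowers u := htop ▸ Subgroup.mem_top v
  rw [← mem_powers_iff_mem_zpowers] at hv
  obtain ⟨t, ht⟩ := hv
  exact ⟨t, by rw [← ht, Units.val_pow_eq_pow_val]⟩

theorem auxNegOne {q : ℕ} [Fact q.Prime] (hq3 : 3 ≤ q) (g : ZMod q)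
    (hg : orderOf g = q - 1) : g ^ ((q - 1) / 2) = -1 := by
  have h2 : 2 ∣ q - 1 := by
    have : Odd q := (Fact.out : q.Prime).odd_of_ne_two (by omega)
    obtain ⟨k, hk⟩ := this; omega
  have hsq : g ^ ((q - 1) / 2) * g ^ ((q - 1) / 2) = 1 := by
    rw [← pow_add]
    have : (q - 1) / 2 + (q - 1) / 2 = q - 1 := by omega
    rw [this, ← hg, pow_orderOf_eq_one]
  rcases mul_self_eq_one_iff.mp hsq with h1 | h1
  · exfalso
    have hdvd := orderOf_dvd_of_pow_eq_one h1
    rw [hg] at hdvd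
    have := Nat.le_of_dvd (by omega) hdvd
    omega
  · exact h1

theorem stmt7
    (p q : ℕ) (hp : Nat.Prime p) (hq : Nat.Prime q) (hne : p ≠ q)
    (hpo : Odd p) (hqo : Odd q)
    (hgcd : Nat.gcd (p - 1) (q - 1) = 4)
    (e : ℕ) (he : e = (p - 1) * (q - 1) / 4)
    (g h : ℕ)
    (hgp : orderOf (g : ZMod p) = p - 1)
    (hgq : orderOf (g : ZMod q) = q - 1)
    (hhp : (h : ZMod p) = (g : ZMod p))
    (hhq : (h : ZMod q) = 1)
    (D : ℕ → Finset (ZMod (p * q)))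
    (hD : ∀ i, D i = (Finset.range (e / 4) ×ˢ Finset.range 4).image
        (fun sj => (g : ZMod (p * q)) ^ (4 * sj.1 + i) * (h : ZMod (p * q)) ^ sj.2))
 :
    ∀ a < 4,
      ((D 0).filter (fun w =>
        (g : ZMod q) ^ a + ZMod.castHom (dvd_mul_left q p) (ZMod q) w = 0)).card
      = if 4 ∣ (a + (q - 1) / 2) then p - 1 else 0 := by
  intro a ha
  haveI hfp : Fact p.Prime := ⟨hp⟩
  haveI hfq : Fact q.Prime := ⟨hq⟩
  have hp2 : 2 ≤ p := hp.two_le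
  have hq2 : 2 ≤ q := hq.two_le
  have hp4 : 4 ∣ p - 1 := hgcd ▸ Nat.gcd_dvd_left (p - 1) (q - 1)
  have hq4 : 4 ∣ q - 1 := hgcd ▸ Nat.gcd_dvd_right (p - 1) (q - 1)
  haveI : NeZero p := ⟨by omega⟩
  haveI : NeZero (p * q) := ⟨Nat.mul_ne_zero (by omega) (by omega)⟩
  set c := a + (q - 1) / 2 with hc
  set castp := ZMod.castHom (dvd_mul_right p q) (ZMod p) with hcastp
  set castq := ZMod.castHom (dvd_mul_left q p) (ZMod q) with hcastq
  have hordq : orderOf ((g : ZMod q)) ≠ 0 := by rw [hgq]; omega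
  have hordp : orderOf ((g : ZMod p)) ≠ 0 := by rw [hgp]; omega
  have hneg : ((g : ZMod q)) ^ ((q - 1) / 2) = -1 := auxNegOne (by omega) _ hgq
  have hkey : ∀ s : ℕ, ((g : ZMod q) ^ (4 * s) = -(g : ZMod q) ^ a ↔ 4 * s ≡ c [MOD q - 1]) := by
    intro s
    have hv : -(g : ZMod q) ^ a = (g : ZMod q) ^ c := by
      rw [hc, pow_add, hneg, mul_neg_one]
    rw [hv, auxPowIff hordq, hgq]
  have hcastq_elt : ∀ s j : ℕ,
      castq ((g : ZMod (p * q)) ^ (4 * s + 0) * (h : ZMod (p * q)) ^ j) = (g : ZMod q) ^ (4 * s) := by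
    intro s j
    rw [map_mul, map_pow, map_pow, map_natCast, map_natCast, hhq, one_pow, mul_one, add_zero]
  have hmemD : ∀ w : ZMod (p * q), w ∈ D 0 ↔ ∃ s j : ℕ, s < e / 4 ∧ j < 4 ∧
      w = (g : ZMod (p * q)) ^ (4 * s + 0) * (h : ZMod (p * q)) ^ j := by
    intro w
    rw [hD 0, Finset.mem_image]
    constructor
    · rintro ⟨⟨s, j⟩, hm, rfl⟩
      rw [Finset.mem_product, Finset.mem_range, Finset.mem_range] at hm
      exact ⟨s, j, hm.1, hm.2, rfl⟩
    · rintro ⟨s, j, hs, hj, rfl⟩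
      exact ⟨(s, j), Finset.mem_product.mpr ⟨Finset.mem_range.mpr hs, Finset.mem_range.mpr hj⟩, rfl⟩
  by_cases hdvd : 4 ∣ c
  · rw [if_pos hdvd]
    have hcop : Nat.Coprime p q := (Nat.coprime_primes hp hq).mpr hne
    have hψval : ∀ x : ZMod (p * q), (ZMod.chineseRemainder hcop) x = (castp x, castq x) := by
      have heq : RingHom.prod castp castq = (ZMod.chineseRemainder hcop).toRingHom :=
        RingHom.ext_zmod _ _
      intro x
      rw [show (ZMod.chineseRemainder hcop) x = (ZMod.chineseRemainder hcop).toRingHom x from rfl,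
        ← heq]
      rfl
    have hinj : Function.Injective (fun x : ZMod (p * q) => (castp x, castq x)) := by
      intro x y hxy
      apply (ZMod.chineseRemainder hcop).injective
      rw [hψval, hψval]
      exact hxy
    set v : ZMod q := -(g : ZMod q) ^ a with hvdef
    set T : Finset (ZMod (p * q)) :=
      Finset.univ.filter (fun w => castp w ≠ 0 ∧ castq w = v) with hTdef
    have hgnep : (g : ZMod p) ≠ 0 := by
      intro h0
      have h1 : (g : ZMod p) ^ (p - 1) = 1 := hgp ▸ pow_orderOf_eq_one _
      rw [h0, zero_pow (by omega : p - 1 ≠ 0)] at h1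
      exact one_ne_zero h1.symm
    have hST : (D 0).filter (fun w => (g : ZMod q) ^ a + castq w = 0) = T := by
      ext w
      simp only [hTdef, Finset.mem_filter, Finset.mem_univ, true_and]
      constructor
      · rintro ⟨hwD, hcond⟩
        obtain ⟨s, j, hs, hj, rfl⟩ := (hmemD w).mp hwD
        constructor
        · rw [map_mul, map_pow, map_pow, map_natCast, map_natCast, hhp]
          exact mul_ne_zero (pow_ne_zero _ hgnep) (pow_ne_zero _ hgnep)
        · rw [hcastq_elt] at hcond ⊢
          exact eq_neg_of_add_eq_zero_right hcond
      · rintro ⟨hw0, hwv⟩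
        refine ⟨?_, by rw [hwv, hvdef]; ring⟩
        -- existence
        obtain ⟨P, hP⟩ := hp4
        obtain ⟨Q, hQ⟩ := hq4
        have hPpos : 0 < P := by omega
        have hQpos : 0 < Q := by omega
        have hPQ : Nat.Coprime P Q := by
          have h44 : Nat.gcd (4 * P) (4 * Q) = 4 := by rw [← hP, ← hQ]; exact hgcd
          rw [Nat.gcd_mul_left] at h44
          unfold Nat.Coprime
          omega
        have he4 : e / 4 = P * Q := by
          rw [he, hP, hQ]
          have h16 : 4 * P * (4 * Q) = P * Q * 16 := by ring
          rw [h16]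
          generalize P * Q = m
          omega
        obtain ⟨t, ht⟩ := auxSurj (g : ZMod p) hgp (castp w) hw0
        obtain ⟨c4, hc4⟩ := hdvd
        set s0 := (Nat.chineseRemainder hPQ (t / 4) c4 : ℕ) with hs0def
        have hs0 := (Nat.chineseRemainder hPQ (t / 4) c4).prop
        set s := s0 % (P * Q) with hsdef
        have hsPQ : s < P * Q := Nat.mod_lt _ (Nat.mul_pos hPpos hQpos)
        have hsP : s ≡ t / 4 [MOD P] :=
          ((Nat.mod_modEq s0 (P * Q)).of_dvd ⟨Q, rfl⟩).trans hs0.1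
        have hsQ : s ≡ c4 [MOD Q] :=
          ((Nat.mod_modEq s0 (P * Q)).of_dvd ⟨P, mul_comm P Q⟩).trans hs0.2
        refine (hmemD w).mpr ⟨s, t % 4, he4 ▸ hsPQ, Nat.mod_lt _ (by norm_num), ?_⟩
        apply hinj
        simp only [Prod.mk.injEq]
        constructor
        · rw [map_mul, map_pow, map_pow, map_natCast, map_natCast, hhp, ← pow_add, ← ht,
            auxPowIff hordp, hgp]
          have h1 : 4 * s ≡ 4 * (t / 4) [MOD 4 * P] := Nat.ModEq.mul_left' 4 hsP
          rw [← hP] at h1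
          have h2 : 4 * s + t % 4 ≡ 4 * (t / 4) + t % 4 [MOD p - 1] := h1.add_right _
          have h3 : 4 * (t / 4) + t % 4 = t := by omega
          rw [h3] at h2
          have h4 : 4 * s + 0 + t % 4 = 4 * s + t % 4 := by omega
          rw [h4]
          exact h2.symm
        · rw [hwv, hcastq_elt, hvdef]
          symm
          rw [hkey s]
          have h1 : 4 * s ≡ 4 * c4 [MOD 4 * Q] := Nat.ModEq.mul_left' 4 hsQ
          rw [← hQ, ← hc4] at h1
          exact h1
    rw [hST]
    have hinj2 : Function.Injective
        (fun x : ZMod p => (ZMod.chineseRemainder hcop).symm (x, v)) := by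
      intro x y hxy
      have := (ZMod.chineseRemainder hcop).symm.injective hxy
      exact (Prod.mk.injEq _ _ _ _).mp this |>.1
    have hT : T = Finset.image (fun x : ZMod p => (ZMod.chineseRemainder hcop).symm (x, v))
        (Finset.univ.erase 0) := by
      ext w
      simp only [hTdef, Finset.mem_filter, Finset.mem_univ, true_and, Finset.mem_image]
      constructor
      · rintro ⟨h0, hv⟩
        refine ⟨castp w, Finset.mem_erase.mpr ⟨h0, Finset.mem_univ _⟩, ?_⟩
        rw [← hv, ← hψval, RingEquiv.symm_apply_apply]
      · rintro ⟨x, hx, rfl⟩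
        have hx0 := (Finset.mem_erase.mp hx).1
        have happ : (ZMod.chineseRemainder hcop)
            ((ZMod.chineseRemainder hcop).symm (x, v)) = (x, v) :=
          (ZMod.chineseRemainder hcop).apply_symm_apply _
        rw [hψval] at happ
        obtain ⟨h1, h2⟩ := (Prod.mk.injEq _ _ _ _).mp happ
        exact ⟨by rw [h1]; exact hx0, h2⟩
    rw [hT, Finset.card_image_of_injective _ hinj2,
      Finset.card_erase_of_mem (Finset.mem_univ _), Finset.card_univ, ZMod.card]
  · rw [if_neg hdvd]
    rw [Finset.card_eq_zero, Finset.filter_eq_empty_iff]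
    intro w hw
    obtain ⟨s, j, hs, hj, rfl⟩ := (hmemD w).mp hw
    intro hcond
    rw [hcastq_elt] at hcond
    have h1 : (g : ZMod q) ^ (4 * s) = -(g : ZMod q) ^ a :=
      eq_neg_of_add_eq_zero_right hcond
    have h2 := (hkey s).mp h1
    have h3 : 4 * s ≡ c [MOD 4] := h2.of_dvd hq4
    apply hdvd
    have h4 := h3
    unfold Nat.ModEq at h4
    omega
end

section
/- Let 0 ≤ a < 4 and 0 ≤ j < 4. There exists x with 0 ≤ x < e/4 such that g^{4x} h^j + g^a ≡ 0 (mod pq) if and only if 4 divides (p-1)/2 - (q-1)/2 - j and 4 divides a + (q-1)/2; moreover, when these divisibility conditions hold, such x is unique (i.e., the solution is unique modulo e/4). -/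
/-!
Write `p - 1 = 4P` and `q - 1 = 4Q`; the hypothesis `gcd (p - 1) (q - 1) = 4` makes `P` and `Q`
coprime, and `e / 4 = PQ`. Modulo `p` we have `h ≡ g`, and modulo `q` we have `h ≡ 1`. Since `g` has
even order `4P` modulo `p`, `g ^ (2P) = -1` there, so `g ^ (4x + j) + g ^ a ≡ 0 (mod p)` is the
congruence `4x + j ≡ a + 2P (mod 4P)`, i.e. `4 ∣ a + 2P - j` together with a congruence for `x`
modulo `P`; likewise modulo `q` with `j` replaced by `0`. By the Chinese remainder theorem the two
congruences for `x` have exactly one common solution below `PQ`.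
-/

theorem pow_add_pow_eq_zero_iff_modEq {R : Type*} [CommRing R] [NoZeroDivisors R] {g : R}
    {m : ℕ} (hg : orderOf g = 2 * m) (hm : m ≠ 0) (a b : ℕ) :
    g ^ a + g ^ b = 0 ↔ a ≡ b + m [MOD 2 * m] := by
  have hfin : IsOfFinOrder g := orderOf_pos_iff.mp (by omega)
  have hhalf : g ^ m = -1 :=
    ((IsPrimitiveRoot.iff_orderOf.mpr hg).pow (by omega) (mul_comm 2 m)).eq_neg_one_of_two_right
  rw [add_eq_zero_iff_eq_neg, ← mul_neg_one, ← hhalf, ← pow_add, hfin.pow_eq_pow_iff_modEq, hg]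

theorem Int.mul_add_modEq_mul_iff {k n x r s : ℤ} (hk : k ≠ 0) :
    k * x + r ≡ s [ZMOD k * n] ↔ k ∣ s - r ∧ x ≡ (s - r) / k [ZMOD n] := by
  simp only [Int.modEq_iff_dvd]
  constructor
  · intro h
    obtain ⟨d, hd⟩ : k ∣ s - r := by
      have hsr : s - r = (s - (k * x + r)) + k * x := by ring
      rw [hsr]
      exact dvd_add ((dvd_mul_right k n).trans h) (dvd_mul_right k x)
    rw [hd, Int.mul_ediv_cancel_left _ hk]
    refine ⟨dvd_mul_right k d, (mul_dvd_mul_iff_left hk).mp ?_⟩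
    rwa [show k * (d - x) = s - (k * x + r) by linear_combination -hd]
  · rintro ⟨⟨d, hd⟩, h⟩
    rw [hd, Int.mul_ediv_cancel_left _ hk] at h
    rw [show s - (k * x + r) = k * (d - x) by linear_combination hd]
    exact mul_dvd_mul_left k h

theorem pow_four_mul_add_add_pow_eq_zero_iff {R : Type*} [CommRing R] [NoZeroDivisors R]
    {g : R} {P : ℕ} (hg : orderOf g = 4 * P) (hP : P ≠ 0) (x r a : ℕ) :
    g ^ (4 * x + r) + g ^ a = 0 ↔
      (4 : ℤ) ∣ a + 2 * P - r ∧ (x : ℤ) ≡ (a + 2 * P - r) / 4 [ZMOD P] := by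
  rw [pow_add_pow_eq_zero_iff_modEq (m := 2 * P) (by rw [hg]; ring) (by omega),
    ← Int.natCast_modEq_iff]
  push_cast
  rw [show (2 * (2 * P) : ℤ) = 4 * P by ring, Int.mul_add_modEq_mul_iff four_ne_zero]

theorem ZMod.natCast_eq_zero_iff_of_coprime {m n : ℕ} (h : m.Coprime n) (a : ℕ) :
    (a : ZMod (m * n)) = 0 ↔ (a : ZMod m) = 0 ∧ (a : ZMod n) = 0 := by
  simp only [ZMod.natCast_eq_zero_iff]
  exact ⟨fun hmn => ⟨dvd_of_mul_right_dvd hmn, dvd_of_mul_left_dvd hmn⟩,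
    fun ⟨hm, hn⟩ => h.mul_dvd_of_dvd_of_dvd hm hn⟩

theorem Nat.existsUnique_lt_mul_intModEq {m n : ℕ} (h : m.Coprime n) (hm : m ≠ 0) (hn : n ≠ 0)
    (a b : ℤ) : ∃! x : ℕ, x < m * n ∧ (x : ℤ) ≡ a [ZMOD m] ∧ (x : ℤ) ≡ b [ZMOD n] := by
  have toNat_emod_modEq : ∀ (c : ℤ) (l : ℕ), l ≠ 0 → ((c % l).toNat : ℤ) ≡ c [ZMOD l] := by
    intro c l hl
    rw [Int.toNat_of_nonneg (Int.emod_nonneg _ (by exact_mod_cast hl))]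
    exact Int.mod_modEq c l
  set k := Nat.chineseRemainder h (a % m).toNat (b % n).toNat
  have hka : (k : ℤ) ≡ a [ZMOD m] :=
    (Int.natCast_modEq_iff.mpr k.2.1).trans (toNat_emod_modEq a m hm)
  have hkb : (k : ℤ) ≡ b [ZMOD n] :=
    (Int.natCast_modEq_iff.mpr k.2.2).trans (toNat_emod_modEq b n hn)
  have hk : (k : ℕ) < m * n := Nat.chineseRemainder_lt_mul h _ _ hm hn
  refine ⟨k, ⟨hk, hka, hkb⟩, fun y ⟨hy, hya, hyb⟩ => Nat.ModEq.eq_of_lt_of_lt ?_ hy hk⟩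
  rw [← Nat.modEq_and_modEq_iff_modEq_mul h, ← Int.natCast_modEq_iff, ← Int.natCast_modEq_iff]
  exact ⟨hya.trans hka.symm, hyb.trans hkb.symm⟩

theorem pow_mul_pow_add_pow_eq_zero_iff {p q P Q g h : ℕ} [Fact p.Prime] [Fact q.Prime]
    (hpq : p.Coprime q) (hgp : orderOf (g : ZMod p) = 4 * P) (hgq : orderOf (g : ZMod q) = 4 * Q)
    (hP : P ≠ 0) (hQ : Q ≠ 0) (hhp : (h : ZMod p) = g) (hhq : (h : ZMod q) = 1) (x j a : ℕ) :
    (g : ZMod (p * q)) ^ (4 * x) * (h : ZMod (p * q)) ^ j + (g : ZMod (p * q)) ^ a = 0 ↔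
      ((4 : ℤ) ∣ a + 2 * P - j ∧ (x : ℤ) ≡ (a + 2 * P - j) / 4 [ZMOD P]) ∧
      ((4 : ℤ) ∣ a + 2 * Q ∧ (x : ℤ) ≡ (a + 2 * Q) / 4 [ZMOD Q]) := by
  have hcast : (g : ZMod (p * q)) ^ (4 * x) * (h : ZMod (p * q)) ^ j + (g : ZMod (p * q)) ^ a =
      ((g ^ (4 * x) * h ^ j + g ^ a : ℕ) : ZMod (p * q)) := by push_cast; rfl
  rw [hcast, ZMod.natCast_eq_zero_iff_of_coprime hpq]
  push_cast
  rw [hhp, hhq, ← pow_add, one_pow, mul_one, pow_four_mul_add_add_pow_eq_zero_iff hgp hP,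
    ← add_zero (4 * x), pow_four_mul_add_add_pow_eq_zero_iff hgq hQ]
  simp

theorem stmt8_general
    (p q : ℕ) (hp : Nat.Prime p) (hq : Nat.Prime q) (hne : p ≠ q)
    (hgcd : Nat.gcd (p - 1) (q - 1) = 4)
    (e : ℕ) (he : e = (p - 1) * (q - 1) / 4)
    (g h : ℕ)
    (hgp : orderOf (g : ZMod p) = p - 1)
    (hgq : orderOf (g : ZMod q) = q - 1)
    (hhp : (h : ZMod p) = (g : ZMod p))
    (hhq : (h : ZMod q) = 1)
 :
    ∀ a : ℕ, a < 4 → ∀ j : ℕ, j < 4 →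
      ((∃ x, x < e / 4 ∧
          (g : ZMod (p * q)) ^ (4 * x) * (h : ZMod (p * q)) ^ j + (g : ZMod (p * q)) ^ a = 0)
        ↔ ((4 : ℤ) ∣ ((((p - 1) / 2 : ℕ) : ℤ) - (((q - 1) / 2 : ℕ) : ℤ) - (j : ℤ)) ∧
            4 ∣ (a + (q - 1) / 2))) ∧
      (((4 : ℤ) ∣ ((((p - 1) / 2 : ℕ) : ℤ) - (((q - 1) / 2 : ℕ) : ℤ) - (j : ℤ)) ∧
            4 ∣ (a + (q - 1) / 2)) →
        ∀ x₁ x₂ : ℕ, x₁ < e / 4 → x₂ < e / 4 →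
          (g : ZMod (p * q)) ^ (4 * x₁) * (h : ZMod (p * q)) ^ j + (g : ZMod (p * q)) ^ a = 0 →
          (g : ZMod (p * q)) ^ (4 * x₂) * (h : ZMod (p * q)) ^ j + (g : ZMod (p * q)) ^ a = 0 →
          x₁ = x₂) := by
  intro a _ j _
  have : Fact p.Prime := ⟨hp⟩
  have : Fact q.Prime := ⟨hq⟩
  obtain ⟨P, hP⟩ : 4 ∣ p - 1 := hgcd ▸ Nat.gcd_dvd_left _ _
  obtain ⟨Q, hQ⟩ : 4 ∣ q - 1 := hgcd ▸ Nat.gcd_dvd_right _ _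
  have hP0 : P ≠ 0 := by have := hp.two_le; omega
  have hQ0 : Q ≠ 0 := by have := hq.two_le; omega
  have hPQ : P.Coprime Q := by
    rw [hP, hQ, Nat.gcd_mul_left] at hgcd
    exact Nat.eq_of_mul_eq_mul_left four_pos (hgcd.trans (mul_one 4).symm)
  have he4 : e / 4 = P * Q := by
    rw [he, hP, hQ, Nat.div_div_eq_div_mul, show 4 * P * (4 * Q) = 4 * 4 * (P * Q) by ring,
      Nat.mul_div_cancel_left _ (by norm_num)]
  have key := pow_mul_pow_add_pow_eq_zero_iff ((Nat.coprime_primes hp hq).mpr hne)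
    (hgp.trans hP) (hgq.trans hQ) hP0 hQ0 hhp hhq
  have hcond : ((4 : ℤ) ∣ ((((p - 1) / 2 : ℕ) : ℤ) - (((q - 1) / 2 : ℕ) : ℤ) - (j : ℤ)) ∧
      4 ∣ (a + (q - 1) / 2)) ↔ (4 : ℤ) ∣ a + 2 * P - j ∧ (4 : ℤ) ∣ a + 2 * Q := by
    rw [hP, hQ]; omega
  have crt := Nat.existsUnique_lt_mul_intModEq hPQ hP0 hQ0
    ((a + 2 * P - j) / 4) ((a + 2 * Q) / 4)
  rw [he4, hcond]
  refine ⟨⟨fun ⟨x, _, hx⟩ => ⟨((key x j a).mp hx).1.1, ((key x j a).mp hx).2.1⟩, ?_⟩, ?_⟩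
  · rintro ⟨hdp, hdq⟩
    obtain ⟨x, ⟨hx, hxP, hxQ⟩, -⟩ := crt
    exact ⟨x, hx, (key x j a).mpr ⟨⟨hdp, hxP⟩, ⟨hdq, hxQ⟩⟩⟩
  · rintro - x₁ x₂ hx₁ hx₂ he₁ he₂
    obtain ⟨⟨-, hP₁⟩, ⟨-, hQ₁⟩⟩ := (key x₁ j a).mp he₁
    obtain ⟨⟨-, hP₂⟩, ⟨-, hQ₂⟩⟩ := (key x₂ j a).mp he₂
    exact crt.unique ⟨hx₁, hP₁, hQ₁⟩ ⟨hx₂, hP₂, hQ₂⟩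

theorem stmt8
    (p q : ℕ) (hp : Nat.Prime p) (hq : Nat.Prime q) (hne : p ≠ q)
    (hpo : Odd p) (hqo : Odd q)
    (hgcd : Nat.gcd (p - 1) (q - 1) = 4)
    (e : ℕ) (he : e = (p - 1) * (q - 1) / 4)
    (g h : ℕ)
    (hgp : orderOf (g : ZMod p) = p - 1)
    (hgq : orderOf (g : ZMod q) = q - 1)
    (hhp : (h : ZMod p) = (g : ZMod p))
    (hhq : (h : ZMod q) = 1)
    (D : ℕ → Finset (ZMod (p * q)))
    (hD : ∀ i, D i = (Finset.range (e / 4) ×ˢ Finset.range 4).image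
        (fun sj => (g : ZMod (p * q)) ^ (4 * sj.1 + i) * (h : ZMod (p * q)) ^ sj.2))
 :
    ∀ a : ℕ, a < 4 → ∀ j : ℕ, j < 4 →
      ((∃ x, x < e / 4 ∧
          (g : ZMod (p * q)) ^ (4 * x) * (h : ZMod (p * q)) ^ j + (g : ZMod (p * q)) ^ a = 0)
        ↔ ((4 : ℤ) ∣ ((((p - 1) / 2 : ℕ) : ℤ) - (((q - 1) / 2 : ℕ) : ℤ) - (j : ℤ)) ∧
            4 ∣ (a + (q - 1) / 2))) ∧
      (((4 : ℤ) ∣ ((((p - 1) / 2 : ℕ) : ℤ) - (((q - 1) / 2 : ℕ) : ℤ) - (j : ℤ)) ∧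
            4 ∣ (a + (q - 1) / 2)) →
        ∀ x₁ x₂ : ℕ, x₁ < e / 4 → x₂ < e / 4 →
          (g : ZMod (p * q)) ^ (4 * x₁) * (h : ZMod (p * q)) ^ j + (g : ZMod (p * q)) ^ a = 0 →
          (g : ZMod (p * q)) ^ (4 * x₂) * (h : ZMod (p * q)) ^ j + (g : ZMod (p * q)) ^ a = 0 →
          x₁ = x₂) :=
  stmt8_general p q hp hq hne hgcd e he g h hgp hgq hhp hhq
end

section
/- Suppose q ≡ 1 (mod 8) and p ≡ 5 (mod 8). Define G(X) = 2·∑_{j=0}^{q-1} X^{jp} + ∑_{i=0}^{3} (ρ - i)·D_i(X) over GR(4, 4^ℓ). Then for every u ≥ 0, G(β^u) equals the image of e_u under the canonical ring map Z_4 → GR(4, 4^ℓ); i.e., G is a defining polynomial of the sequence (e_u). -/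
/-!
Under `ZMod (p * q) ≃ ZMod p × ZMod q` we have `g ^ a * h ^ b ↦ (g ^ (a + b), g ^ a)`, so the
classes `D_i` partition the units and `x D_i = D_(i+k)` for `x ∈ D_k`. In `GR(4, 4^ℓ)` every
element is a unit or squares to zero, so for a root of unity `ζ ≠ 1` of odd order, `ζ - 1` is a
unit and `∑ ζ ^ j = 0`. By inclusion–exclusion over the multiples of `p` and `q`, the sums
`T_i = D_i(β)` then satisfy `∑ T_i = ∑_(v unit) β ^ v = 1`, and for `u ∈ D_k`
`∑ (ρ - i) D_i(β ^ u) = ∑ (ρ - i) T_(i+k) = k`.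
If `p ∣ u` then `u h = u`, so every `D_i(β ^ u)` is `4` times a sum. If `q ∣ u` then
`u h = u g`, so `D_i(β ^ u) = ((q - 1) / 4) Z` with `Z` independent of `i`; as `(q - 1) / 4` is
even, `∑ (ρ - i) D_i(β ^ u) = -6 ((q - 1) / 4) Z = 0`. Finally `2 ∑_j β ^ (u j p)` is
`2 q = 2` if `q ∣ u` and `0` otherwise.
-/

open Finset

namespace TruncatedWittVector

open WittVector

variable {K : Type*} [Field K] [CharP K 2]

theorem mul_self_eq_zero_of_coeff_zero {x : TruncatedWittVector 2 2 K}
    (hx : x.coeff 0 = 0) : x * x = 0 := by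
  obtain ⟨y, rfl⟩ := WittVector.truncate_surjective (p := 2) (R := K) 2 x
  rw [WittVector.coeff_truncate] at hx
  have hy : y = verschiebung^[1] (y.shift 1) :=
    eq_iterate_verschiebung fun i hi => by simpa [Nat.lt_one_iff.1 hi] using hx
  rw [← map_mul, hy, iterate_verschiebung_mul]
  exact (mem_ker_truncate _ _).2 fun i hi => iterate_verschiebung_coeff_eq_zero _ hi

theorem isUnit_of_coeff_zero_ne_zero {x : TruncatedWittVector 2 2 K} (hx : x.coeff 0 ≠ 0) :
    IsUnit x := by
  obtain ⟨y, rfl⟩ := WittVector.truncate_surjective (p := 2) (R := K) 2 x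
  rw [WittVector.coeff_truncate] at hx
  exact (WittVector.isUnit_of_coeff_zero_ne_zero y hx).map _

theorem isUnit_or_mul_self_eq_zero (x : TruncatedWittVector 2 2 K) :
    IsUnit x ∨ x * x = 0 := by
  by_cases hx : x.coeff 0 = 0
  · exact .inr (mul_self_eq_zero_of_coeff_zero hx)
  · exact .inl (isUnit_of_coeff_zero_ne_zero hx)

theorem four_eq_zero : (4 : TruncatedWittVector 2 2 K) = 0 := by
  have h2 : (2 : TruncatedWittVector 2 2 K).coeff 0 = 0 := by
    rw [← map_ofNat (WittVector.truncate 2), WittVector.coeff_truncate]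
    exact (map_ofNat WittVector.constantCoeff 2).trans (CharP.cast_eq_zero K 2)
  linear_combination mul_self_eq_zero_of_coeff_zero h2

theorem isUnit_sub_one_of_pow_eq_one {ζ : TruncatedWittVector 2 2 K} {n : ℕ} (hn : Odd n)
    (hζn : ζ ^ n = 1) (hζ : ζ ≠ 1) : IsUnit (ζ - 1) := by
  refine (isUnit_or_mul_self_eq_zero _).resolve_right fun h => hζ ?_
  -- `ζ = 1 + ε` with `ε² = 0` gives `ζ⁴ = 1 + 4ε = 1`, and `4` is prime to `n`.
  have h4 : ζ ^ 4 = 1 := by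
    linear_combination (ζ ^ 2 + 2 * ζ + 3) * h + (ζ - 1) * four_eq_zero (K := K)
  have hcop : Nat.Coprime 4 n :=
    Nat.Coprime.pow_left 2 (Nat.coprime_two_left.2 hn : Nat.Coprime 2 n)
  exact orderOf_eq_one_iff.1 <| Nat.eq_one_of_dvd_coprimes hcop
    (orderOf_dvd_of_pow_eq_one h4) (orderOf_dvd_of_pow_eq_one hζn)

theorem geom_sum_eq_zero_of_pow_eq_one {ζ : TruncatedWittVector 2 2 K} {n : ℕ} (hn : Odd n)
    (hζn : ζ ^ n = 1) (hζ : ζ ≠ 1) : ∑ j ∈ range n, ζ ^ j = 0 := by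
  have := geom_sum_mul ζ n
  rw [hζn, sub_self] at this
  exact (isUnit_sub_one_of_pow_eq_one hn hζn hζ).mul_left_eq_zero.1 this

theorem geom_sum_pow_eq_zero_of_orderOf {β : TruncatedWittVector 2 2 K} {d n : ℕ}
    (hβ : orderOf β = d * n) (hd : 0 < d) (hn : Odd n) (hn1 : n ≠ 1) :
    ∑ k ∈ range n, (β ^ d) ^ k = 0 := by
  refine geom_sum_eq_zero_of_pow_eq_one hn (by rw [← pow_mul, ← hβ, pow_orderOf_eq_one])
    fun h => hn1 ?_
  have := orderOf_dvd_of_pow_eq_one h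
  rw [hβ, ← mul_one d] at this
  exact Nat.dvd_one.1 (Nat.dvd_of_mul_dvd_mul_left hd (by simpa using this))

theorem two_mul_sum_pow_mul_eq {β : TruncatedWittVector 2 2 K} {p q : ℕ}
    (hβ : orderOf β = p * q) (hp : 0 < p) (hq : Odd q) (u : ℕ) :
    2 * ∑ j ∈ range q, (β ^ u) ^ (j * p) = if q ∣ u then 2 else 0 := by
  have hβu : β ^ (u * p) = 1 ↔ q ∣ u := by
    rw [← orderOf_dvd_iff_pow_eq_one, hβ, mul_comm u p, Nat.mul_dvd_mul_iff_left hp]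
  rw [sum_congr rfl fun j _ => show (β ^ u) ^ (j * p) = (β ^ (u * p)) ^ j by ring]
  split_ifs with hqu
  · obtain ⟨k, rfl⟩ := hq
    simp only [hβu.2 hqu, one_pow, sum_const, card_range, nsmul_eq_mul, mul_one]
    push_cast
    linear_combination k * four_eq_zero (K := K)
  · refine mul_eq_zero_of_right _ (geom_sum_eq_zero_of_pow_eq_one hq ?_ (mt hβu.1 hqu))
    rw [← pow_mul, mul_assoc, mul_comm, pow_mul, ← hβ, pow_orderOf_eq_one, one_pow]

end TruncatedWittVector

theorem Function.Periodic.sum_range_add {M : Type*} [AddCommMonoid M] {f : ℕ → M} {T : ℕ}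
    (hf : Function.Periodic f T) (i : ℕ) :
    ∑ m ∈ range T, f (m + i) = ∑ m ∈ range T, f m := by
  conv_rhs => rw [← Nat.image_Ico_mod i T, sum_image (Nat.mod_injOn_Ico i T)]
  rw [sum_Ico_eq_sum_range, Nat.add_sub_cancel_left]
  simp only [hf.map_mod_nat, add_comm]

theorem Function.Periodic.sum_range_mul_add {M : Type*} [AddCommMonoid M] {f : ℕ → M} {T : ℕ}
    (hf : Function.Periodic f T) (n i : ℕ) :
    ∑ m ∈ range (n * T), f (m + i) = n • ∑ m ∈ range T, f m := by
  induction n with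
  | zero => simp
  | succ n ih =>
    rw [add_one_mul, Finset.sum_range_add, ih, succ_nsmul, ← hf.sum_range_add i]
    congr 1
    refine sum_congr rfl fun m _ => ?_
    rw [add_assoc, add_comm]
    exact hf.nsmul n _

theorem Finset.sum_range_mul_eq_sum_sum {M : Type*} [AddCommMonoid M] (f : ℕ → M) (k n : ℕ) :
    ∑ m ∈ range (k * n), f m = ∑ s ∈ range n, ∑ j ∈ range k, f (k * s + j) := by
  induction n with
  | zero => simp
  | succ n ih => rw [mul_add_one, sum_range_add, ih, sum_range_succ]

theorem Finset.sum_range_mul_filter_dvd {M : Type*} [AddCommMonoid M] (f : ℕ → M) {d : ℕ}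
    (hd : 0 < d) (n : ℕ) :
    ∑ m ∈ range (d * n) with d ∣ m, f m = ∑ k ∈ range n, f (d * k) := by
  rw [← sum_image fun a _ b _ h => Nat.eq_of_mul_eq_mul_left hd h]
  congr 1
  ext m
  simp only [mem_filter, mem_range, mem_image]
  constructor
  · rintro ⟨hm, k, rfl⟩
    exact ⟨k, Nat.lt_of_mul_lt_mul_left hm, rfl⟩
  · rintro ⟨k, hk, rfl⟩
    exact ⟨Nat.mul_lt_mul_of_pos_left hk hd, dvd_mul_right d k⟩

theorem ZMod.sum_eq_sum_range {M : Type*} [AddCommMonoid M] (N : ℕ) [NeZero N]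
    (f : ZMod N → M) : ∑ v, f v = ∑ m ∈ range N, f m :=
  sum_nbij' ZMod.val Nat.cast (fun v _ => mem_range.2 (ZMod.val_lt v)) (fun _ _ => mem_univ _)
    (fun v _ => ZMod.natCast_zmod_val v) (fun m hm => ZMod.val_cast_of_lt (mem_range.1 hm))
    (fun v _ => by rw [ZMod.natCast_zmod_val])

theorem ZMod.card_filter_isUnit (n : ℕ) [NeZero n] :
    #{v : ZMod n | IsUnit v} = n.totient := by
  rw [← ZMod.card_units_eq_totient, ← card_univ,
    ← card_map ⟨Units.val, Units.val_injective⟩]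
  congr 1
  ext v
  simp [IsUnit, eq_comm]

theorem pow_pow_val {M : Type*} [Monoid M] {N : ℕ} [NeZero N] {β : M} (hβ : β ^ N = 1)
    (u : ℕ) (v : ZMod N) : (β ^ u) ^ v.val = β ^ ((u : ZMod N) * v).val := by
  rw [← pow_mul, ZMod.val_mul, ZMod.val_natCast, Nat.mod_mul_mod]
  exact pow_eq_pow_of_modEq (Nat.mod_modEq _ _).symm hβ

theorem natCast_mem_image_Icc_mul_or_eq_zero {n m N u : ℕ} [NeZero N] (hN : n * m = N)
    (hmu : m ∣ u) :
    (u : ZMod N) ∈ (Icc 1 (n - 1)).image (fun k => ((k * m : ℕ) : ZMod N)) ∨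
      (u : ZMod N) = 0 := by
  by_cases hNu : N ∣ u
  · exact .inr ((ZMod.natCast_eq_zero_iff u N).2 hNu)
  have hmN : m ∣ u % N := (Nat.dvd_mod_iff (hN ▸ dvd_mul_left m n)).2 hmu
  have hpos : 0 < u % N := Nat.pos_of_ne_zero fun h => hNu (Nat.dvd_of_mod_eq_zero h)
  have hlt : u % N < m * n := by rw [mul_comm, hN]; exact Nat.mod_lt u (NeZero.pos N)
  refine .inl (mem_image.2 ⟨u % N / m, mem_Icc.2 ⟨?_, ?_⟩, ?_⟩)
  · exact (Nat.one_le_div_iff (Nat.pos_of_dvd_of_pos hmN hpos)).2 (Nat.le_of_dvd hpos hmN)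
  · have := Nat.div_lt_of_lt_mul hlt
    omega
  · rw [Nat.div_mul_cancel hmN, ZMod.natCast_mod]

theorem Nat.ite_coprime_mul_eq {R : Type*} [AddCommGroup R] {p q : ℕ} (hp : p.Prime)
    (hq : q.Prime) (hpq : p.Coprime q) (m : ℕ) (x : R) :
    (if m.Coprime (p * q) then x else 0) =
      x - (if p ∣ m then x else 0) - (if q ∣ m then x else 0) +
        (if p * q ∣ m then x else 0) := by
  have hcop : m.Coprime (p * q) ↔ ¬p ∣ m ∧ ¬q ∣ m := by
    rw [Nat.coprime_mul_iff_right, Nat.coprime_comm, hp.coprime_iff_not_dvd, Nat.coprime_comm,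
      hq.coprime_iff_not_dvd]
  have hdvd : p * q ∣ m ↔ p ∣ m ∧ q ∣ m :=
    ⟨fun h => ⟨(dvd_mul_right p q).trans h, (dvd_mul_left q p).trans h⟩,
      fun h => hpq.mul_dvd_of_dvd_of_dvd h.1 h.2⟩
  by_cases hpm : p ∣ m <;> by_cases hqm : q ∣ m <;> simp [hcop, hdvd, hpm, hqm]

theorem sum_isUnit_pow_val {R : Type*} [CommRing R] {p q : ℕ} (hp : p.Prime) (hq : q.Prime)
    (hpq : p.Coprime q) [NeZero (p * q)] {β : R} (hβ : ∑ m ∈ range (p * q), β ^ m = 0)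
    (hβp : ∑ k ∈ range q, (β ^ p) ^ k = 0) (hβq : ∑ k ∈ range p, (β ^ q) ^ k = 0) :
    ∑ v : ZMod (p * q) with IsUnit v, β ^ v.val = 1 := by
  calc ∑ v : ZMod (p * q) with IsUnit v, β ^ v.val
      = ∑ m ∈ range (p * q), if m.Coprime (p * q) then β ^ m else 0 := by
        rw [sum_filter, ZMod.sum_eq_sum_range]
        refine sum_congr rfl fun m hm => ?_
        simp only [ZMod.isUnit_iff_coprime, ZMod.val_cast_of_lt (mem_range.1 hm)]
    _ = ∑ m ∈ range (p * q), β ^ m - ∑ m ∈ range (p * q) with p ∣ m, β ^ m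
          - ∑ m ∈ range (q * p) with q ∣ m, β ^ m
          + ∑ m ∈ range (p * q * 1) with p * q ∣ m, β ^ m := by
        simp only [Nat.ite_coprime_mul_eq hp hq hpq, sum_add_distrib, sum_sub_distrib, sum_filter,
          mul_one, mul_comm q p]
    _ = 1 := by
      rw [sum_range_mul_filter_dvd _ hp.pos, sum_range_mul_filter_dvd _ hq.pos,
        sum_range_mul_filter_dvd _ (Nat.mul_pos hp.pos hq.pos)]
      simp [pow_mul, hβ, hβp, hβq]

theorem sum_sub_mul_shift_eq {R : Type*} [CommRing R] (h4 : (4 : R) = 0) (T : ℕ → R)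
    (hT : ∀ n, T (n + 4) = T n) (hsum : ∑ i ∈ range 4, T i = 1) {k : ℕ} (hk : k < 4) :
    ∑ i ∈ range 4, (∑ j ∈ Icc (1 : ℕ) 3, (j : R) * T j - i) * T (i + k) = k := by
  simp only [sum_range_succ, range_zero, sum_empty] at hsum
  have hρ : ∑ j ∈ Icc (1 : ℕ) 3, (j : R) * T j = T 1 + 2 * T 2 + 3 * T 3 := by
    rw [show Icc (1 : ℕ) 3 = {1, 2, 3} by rfl, sum_insert (by decide), sum_pair (by decide)]
    push_cast
    ring
  rw [hρ]
  -- Reindexing by `m = i + k`, the sum is `ρ ∑ T - ∑ (m - k) T m = ρ - ρ + k` modulo `4`.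
  interval_cases k <;>
    simp only [sum_range_succ, range_zero, sum_empty, Nat.reduceAdd, hT, Nat.cast_ofNat,
      Nat.cast_zero, Nat.cast_one]
  · linear_combination (T 1 + 2 * T 2 + 3 * T 3) * hsum
  · linear_combination (T 1 + 2 * T 2 + 3 * T 3 + 1) * hsum - T 0 * h4
  · linear_combination (T 1 + 2 * T 2 + 3 * T 3 + 2) * hsum - (T 0 + T 1) * h4
  · linear_combination (T 1 + 2 * T 2 + 3 * T 3 + 3) * hsum - (T 0 + T 1 + T 2) * h4

def cyclotomicClass {N : ℕ} (g h : ZMod N) (n i : ℕ) : Finset (ZMod N) :=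
  (range n ×ˢ range 4).image fun sj => g ^ (4 * sj.1 + i) * h ^ sj.2

-- For a common primitive root `g` of `p` and `q`, `A = (p - 1) / 4` and `B = (q - 1) / 4`.
structure DingHellesethData (p q A B : ℕ) (g h : ZMod (p * q)) : Prop where
  coprime : p.Coprime q
  coprime_AB : A.Coprime B
  pos_A : 0 < A
  pos_B : 0 < B
  orderOf_fst : orderOf (ZMod.chineseRemainder coprime g).1 = 4 * A
  orderOf_snd : orderOf (ZMod.chineseRemainder coprime g).2 = 4 * B
  chineseRemainder_h :
    ZMod.chineseRemainder coprime h = ((ZMod.chineseRemainder coprime g).1, 1)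

theorem DingHellesethData.of_natCast {p q A B g h : ℕ} (hp : p.Prime) (hq : q.Prime)
    (hne : p ≠ q) (hgcd : Nat.gcd (p - 1) (q - 1) = 4) (hA : p - 1 = 4 * A) (hB : q - 1 = 4 * B)
    (hgp : orderOf (g : ZMod p) = p - 1) (hgq : orderOf (g : ZMod q) = q - 1)
    (hhp : (h : ZMod p) = g) (hhq : (h : ZMod q) = 1) :
    DingHellesethData p q A B g h where
  coprime := (Nat.coprime_primes hp hq).2 hne
  coprime_AB := by
    rw [hA, hB, Nat.gcd_mul_left] at hgcd
    omega
  pos_A := by have := hp.two_le; omega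
  pos_B := by have := hq.two_le; omega
  orderOf_fst := by simpa [hA] using hgp
  orderOf_snd := by simpa [hB] using hgq
  chineseRemainder_h := by simp [Prod.ext_iff, hhp, hhq]

namespace DingHellesethData

variable {p q A B : ℕ} {g h : ZMod (p * q)}

theorem chineseRemainder_pow_mul_pow (H : DingHellesethData p q A B g h) (a b : ℕ) :
    ZMod.chineseRemainder H.coprime (g ^ a * h ^ b) =
      ((ZMod.chineseRemainder H.coprime g).1 ^ (a + b),
        (ZMod.chineseRemainder H.coprime g).2 ^ a) := by
  simp [H.chineseRemainder_h, pow_add, Prod.ext_iff]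

theorem isOfFinOrder_fst (H : DingHellesethData p q A B g h) :
    IsOfFinOrder (ZMod.chineseRemainder H.coprime g).1 :=
  orderOf_pos_iff.1 (H.orderOf_fst ▸ Nat.mul_pos four_pos H.pos_A)

theorem isOfFinOrder_snd (H : DingHellesethData p q A B g h) :
    IsOfFinOrder (ZMod.chineseRemainder H.coprime g).2 :=
  orderOf_pos_iff.1 (H.orderOf_snd ▸ Nat.mul_pos four_pos H.pos_B)

theorem pow_mul_pow_eq_iff (H : DingHellesethData p q A B g h) {a b c d : ℕ} :
    g ^ a * h ^ b = g ^ c * h ^ d ↔ a + b ≡ c + d [MOD 4 * A] ∧ a ≡ c [MOD 4 * B] := by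
  rw [← (ZMod.chineseRemainder H.coprime).injective.eq_iff, H.chineseRemainder_pow_mul_pow,
    H.chineseRemainder_pow_mul_pow, Prod.ext_iff, H.isOfFinOrder_fst.pow_eq_pow_iff_modEq,
    H.isOfFinOrder_snd.pow_eq_pow_iff_modEq, H.orderOf_fst, H.orderOf_snd]

theorem isUnit_pow_mul_pow (H : DingHellesethData p q A B g h) (a b : ℕ) :
    IsUnit (g ^ a * h ^ b) := by
  rw [← isUnit_map_iff (ZMod.chineseRemainder H.coprime), H.chineseRemainder_pow_mul_pow,
    Prod.isUnit_iff]
  exact ⟨H.isOfFinOrder_fst.isUnit.pow _, H.isOfFinOrder_snd.isUnit.pow _⟩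

theorem injOn_cyclotomicClass (H : DingHellesethData p q A B g h) (i : ℕ) :
    Set.InjOn (fun sj : ℕ × ℕ => g ^ (4 * sj.1 + i) * h ^ sj.2)
      ↑(range (A * B) ×ˢ range 4) := by
  rintro ⟨s, j⟩ hsj ⟨s', j'⟩ hsj' heq
  simp only [coe_product, coe_range, Set.mem_prod, Set.mem_Iio] at hsj hsj'
  obtain ⟨hA, hB⟩ := H.pow_mul_pow_eq_iff.1 heq
  have hj : j = j' := by
    have := hA.of_dvd (dvd_mul_right 4 A)
    unfold Nat.ModEq at this
    omega
  subst hj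
  have hsA : s ≡ s' [MOD A] :=
    ((hA.add_right_cancel' j).add_right_cancel' i).mul_left_cancel' four_ne_zero
  have hsB : s ≡ s' [MOD B] := (hB.add_right_cancel' i).mul_left_cancel' four_ne_zero
  rw [((Nat.modEq_and_modEq_iff_modEq_mul H.coprime_AB).1 ⟨hsA, hsB⟩).eq_of_lt_of_lt hsj.1
    hsj'.1]

theorem pow_mul_pow_mem_cyclotomicClass (H : DingHellesethData p q A B g h) (a b i : ℕ) :
    g ^ (4 * a + i) * h ^ b ∈ cyclotomicClass g h (A * B) i := by
  let s := Nat.chineseRemainder H.coprime_AB (a + b / 4) a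
  refine mem_image.2 ⟨(s, b % 4), ?_, H.pow_mul_pow_eq_iff.2 ⟨?_, ?_⟩⟩
  · simpa using
      ⟨Nat.chineseRemainder_lt_mul _ _ _ H.pos_A.ne' H.pos_B.ne', Nat.mod_lt b four_pos⟩
  · have := (s.prop.1.mul_left' 4).add_right (i + b % 4)
    rwa [show 4 * (a + b / 4) + (i + b % 4) = 4 * a + i + b by omega, ← add_assoc] at this
  · exact (s.prop.2.mul_left' 4).add_right i

theorem card_cyclotomicClass (H : DingHellesethData p q A B g h) (i : ℕ) :
    #(cyclotomicClass g h (A * B) i) = 4 * (A * B) := by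
  rw [cyclotomicClass, card_image_of_injOn (H.injOn_cyclotomicClass i), card_product, card_range,
    card_range, mul_comm]

theorem sum_cyclotomicClass (H : DingHellesethData p q A B g h) {M : Type*} [AddCommMonoid M]
    (f : ZMod (p * q) → M) (i : ℕ) :
    ∑ v ∈ cyclotomicClass g h (A * B) i, f v =
      ∑ s ∈ range (A * B), ∑ j ∈ range 4, f (g ^ (4 * s + i) * h ^ j) := by
  rw [cyclotomicClass, sum_image (H.injOn_cyclotomicClass i), sum_product]

theorem isUnit_of_mem_cyclotomicClass (H : DingHellesethData p q A B g h) {v : ZMod (p * q)}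
    {n i : ℕ} (hv : v ∈ cyclotomicClass g h n i) : IsUnit v := by
  obtain ⟨_, _, rfl⟩ := mem_image.1 hv
  exact H.isUnit_pow_mul_pow _ _

theorem cyclotomicClass_add_four (H : DingHellesethData p q A B g h) (i : ℕ) :
    cyclotomicClass g h (A * B) (i + 4) = cyclotomicClass g h (A * B) i := by
  refine eq_of_subset_of_card_le (fun v hv => ?_)
    (by rw [H.card_cyclotomicClass, H.card_cyclotomicClass])
  obtain ⟨⟨s, j⟩, -, rfl⟩ := mem_image.1 hv
  simpa [show 4 * (s + 1) + i = 4 * s + (i + 4) by ring] using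
    H.pow_mul_pow_mem_cyclotomicClass (s + 1) j i

theorem image_mul_cyclotomicClass (H : DingHellesethData p q A B g h) {x : ZMod (p * q)}
    {k : ℕ} (hx : x ∈ cyclotomicClass g h (A * B) k) (i : ℕ) :
    (cyclotomicClass g h (A * B) i).image (x * ·) = cyclotomicClass g h (A * B) (i + k) := by
  have hinj : Set.InjOn (x * ·) (cyclotomicClass g h (A * B) i) :=
    fun _ _ _ _ hab => (H.isUnit_of_mem_cyclotomicClass hx).mul_left_cancel hab
  refine eq_of_subset_of_card_le (fun w hw => ?_) ?_
  · obtain ⟨_, hv, rfl⟩ := mem_image.1 hw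
    obtain ⟨⟨s, j⟩, -, rfl⟩ := mem_image.1 hv
    obtain ⟨⟨s₀, j₀⟩, -, rfl⟩ := mem_image.1 hx
    convert H.pow_mul_pow_mem_cyclotomicClass (s₀ + s) (j₀ + j) (i + k) using 1
    ring
  · rw [card_image_of_injOn hinj, H.card_cyclotomicClass, H.card_cyclotomicClass]

theorem disjoint_cyclotomicClass (H : DingHellesethData p q A B g h) {i j : ℕ} (hi : i < 4)
    (hj : j < 4) (hij : i ≠ j) :
    Disjoint (cyclotomicClass g h (A * B) i) (cyclotomicClass g h (A * B) j) := by
  refine disjoint_left.2 fun v hv hv' => ?_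
  obtain ⟨⟨s, a⟩, -, rfl⟩ := mem_image.1 hv
  obtain ⟨⟨s', b⟩, -, heq⟩ := mem_image.1 hv'
  have := (H.pow_mul_pow_eq_iff.1 heq).2.of_dvd (dvd_mul_right 4 B)
  unfold Nat.ModEq at this
  omega

theorem biUnion_cyclotomicClass (H : DingHellesethData p q A B g h) [NeZero (p * q)]
    (hp : p.Prime) (hq : q.Prime) (hpA : p - 1 = 4 * A) (hqB : q - 1 = 4 * B) :
    (range 4).biUnion (cyclotomicClass g h (A * B)) =
      ({v | IsUnit v} : Finset (ZMod (p * q))) := by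
  refine eq_of_subset_of_card_le (fun v hv => ?_) (le_of_eq ?_)
  · obtain ⟨i, -, hv⟩ := mem_biUnion.1 hv
    exact mem_filter.2 ⟨mem_univ _, H.isUnit_of_mem_cyclotomicClass hv⟩
  · rw [card_biUnion fun i hi j hj hij =>
      H.disjoint_cyclotomicClass (mem_range.1 hi) (mem_range.1 hj) hij, ZMod.card_filter_isUnit,
      Nat.totient_mul H.coprime, Nat.totient_prime hp, Nat.totient_prime hq, hpA, hqB]
    simp only [H.card_cyclotomicClass, sum_const, card_range, smul_eq_mul]
    ring

theorem exists_natCast_mem_cyclotomicClass (H : DingHellesethData p q A B g h)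
    [NeZero (p * q)] (hp : p.Prime) (hq : q.Prime) (hpA : p - 1 = 4 * A) (hqB : q - 1 = 4 * B)
    {u : ℕ} (hpu : ¬p ∣ u) (hqu : ¬q ∣ u) :
    ∃ k ∈ range 4, (u : ZMod (p * q)) ∈ cyclotomicClass g h (A * B) k := by
  have hunit : IsUnit (u : ZMod (p * q)) := (ZMod.isUnit_iff_coprime u _).2 <|
    Nat.Coprime.mul_right (hp.coprime_iff_not_dvd.2 hpu).symm (hq.coprime_iff_not_dvd.2 hqu).symm
  exact mem_biUnion.1 <| (H.biUnion_cyclotomicClass hp hq hpA hqB).symm ▸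
    mem_filter.2 ⟨mem_univ _, hunit⟩

theorem sum_mul_cyclotomicClass_of_mem (H : DingHellesethData p q A B g h) {M : Type*}
    [AddCommMonoid M] (f : ZMod (p * q) → M) {x : ZMod (p * q)} {k : ℕ}
    (hx : x ∈ cyclotomicClass g h (A * B) k) (i : ℕ) :
    ∑ v ∈ cyclotomicClass g h (A * B) i, f (x * v) =
      ∑ v ∈ cyclotomicClass g h (A * B) (i + k), f v := by
  rw [← H.image_mul_cyclotomicClass hx,
    sum_image fun _ _ _ _ hab => (H.isUnit_of_mem_cyclotomicClass hx).mul_left_cancel hab]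

theorem sum_mul_cyclotomicClass_of_fst_eq_zero (H : DingHellesethData p q A B g h) {M : Type*}
    [AddCommMonoid M] (f : ZMod (p * q) → M) {x : ZMod (p * q)}
    (hx : (ZMod.chineseRemainder H.coprime x).1 = 0) (i : ℕ) :
    ∑ v ∈ cyclotomicClass g h (A * B) i, f (x * v) =
      4 • ∑ s ∈ range (A * B), f (x * g ^ (4 * s + i)) := by
  have hxh : ∀ a j, x * (g ^ a * h ^ j) = x * g ^ a := fun a j =>
    (ZMod.chineseRemainder H.coprime).injective <|
      Prod.ext (by simp [hx]) (by simp [H.chineseRemainder_h])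
  simp only [H.sum_cyclotomicClass, hxh, sum_const, card_range, smul_sum]

theorem sum_mul_cyclotomicClass_of_snd_eq_zero (H : DingHellesethData p q A B g h) {M : Type*}
    [AddCommMonoid M] (f : ZMod (p * q) → M) {x : ZMod (p * q)}
    (hx : (ZMod.chineseRemainder H.coprime x).2 = 0) (i : ℕ) :
    ∑ v ∈ cyclotomicClass g h (A * B) i, f (x * v) =
      B • ∑ m ∈ range (4 * A), f (x * g ^ m) := by
  have hxh : ∀ s j, x * (g ^ (4 * s + i) * h ^ j) = x * g ^ (4 * s + j + i) := fun s j =>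
    (ZMod.chineseRemainder H.coprime).injective <|
      Prod.ext (by simp [H.chineseRemainder_h]; ring) (by simp [hx])
  have hper : Function.Periodic (fun m => f (x * g ^ m)) (4 * A) := fun m => by
    have hg : (ZMod.chineseRemainder H.coprime g).1 ^ (4 * A) = 1 :=
      H.orderOf_fst ▸ pow_orderOf_eq_one _
    show f (x * g ^ (m + 4 * A)) = f (x * g ^ m)
    congr 1
    exact (ZMod.chineseRemainder H.coprime).injective <|
      Prod.ext (by simp [pow_add, hg]) (by simp [hx])
  rw [H.sum_cyclotomicClass]
  simp only [hxh]
  rw [← sum_range_mul_eq_sum_sum (fun m => f (x * g ^ (m + i))),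
    show 4 * (A * B) = B * (4 * A) by ring, hper.sum_range_mul_add]

theorem sum_sub_mul_sum_mul_eq_zero (H : DingHellesethData p q A B g h) {R : Type*}
    [CommRing R] (h4 : (4 : R) = 0) (hB : Even B) (ρ : R) (f : ZMod (p * q) → R)
    {x : ZMod (p * q)}
    (hx : (ZMod.chineseRemainder H.coprime x).1 = 0 ∨
      (ZMod.chineseRemainder H.coprime x).2 = 0) :
    ∑ i ∈ range 4, (ρ - i) * ∑ v ∈ cyclotomicClass g h (A * B) i, f (x * v) = 0 := by
  rcases hx with hx | hx
  · simp [H.sum_mul_cyclotomicClass_of_fst_eq_zero f hx, nsmul_eq_mul, h4]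
  · obtain ⟨c, rfl⟩ := hB
    simp only [H.sum_mul_cyclotomicClass_of_snd_eq_zero f hx, sum_range_succ, range_zero,
      sum_empty, nsmul_eq_mul]
    set Z := ∑ m ∈ range (4 * A), f (x * g ^ m)
    push_cast
    linear_combination (2 * c * ρ * Z - 3 * c * Z) * h4

theorem sum_sum_cyclotomicClass_pow_val {K : Type*} [Field K] [CharP K 2]
    (H : DingHellesethData p q A B g h) [NeZero (p * q)] (hp : p.Prime) (hq : q.Prime)
    (hpA : p - 1 = 4 * A) (hqB : q - 1 = 4 * B) {β : TruncatedWittVector 2 2 K}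
    (hβ : orderOf β = p * q) :
    ∑ i ∈ range 4, ∑ v ∈ cyclotomicClass g h (A * B) i, β ^ v.val = 1 := by
  have hpo : Odd p := Nat.odd_iff.2 (by have := hp.two_le; omega)
  have hqo : Odd q := Nat.odd_iff.2 (by have := hq.two_le; omega)
  rw [← sum_biUnion fun i hi j hj hij =>
    H.disjoint_cyclotomicClass (mem_range.1 hi) (mem_range.1 hj) hij,
    H.biUnion_cyclotomicClass hp hq hpA hqB]
  refine sum_isUnit_pow_val hp hq H.coprime ?_
    (TruncatedWittVector.geom_sum_pow_eq_zero_of_orderOf hβ hp.pos hqo hq.one_lt.ne')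
    (TruncatedWittVector.geom_sum_pow_eq_zero_of_orderOf (hβ.trans (mul_comm p q)) hq.pos hpo
      hp.one_lt.ne')
  simpa using TruncatedWittVector.geom_sum_pow_eq_zero_of_orderOf (hβ.trans (one_mul _).symm)
    one_pos (hpo.mul hqo) (Nat.one_lt_mul_iff.2 ⟨hp.pos, hq.pos, .inl hp.one_lt⟩).ne'

theorem sum_sub_mul_sum_mul_of_mem (H : DingHellesethData p q A B g h) {R : Type*}
    [CommRing R] (h4 : (4 : R) = 0) (f : ZMod (p * q) → R)
    (hf : ∑ i ∈ range 4, ∑ v ∈ cyclotomicClass g h (A * B) i, f v = 1) {x : ZMod (p * q)}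
    {k : ℕ} (hk : k < 4) (hx : x ∈ cyclotomicClass g h (A * B) k) :
    ∑ i ∈ range 4,
        (∑ j ∈ Icc (1 : ℕ) 3, (j : R) * ∑ v ∈ cyclotomicClass g h (A * B) j, f v - i) *
          ∑ v ∈ cyclotomicClass g h (A * B) i, f (x * v) = k := by
  simp only [H.sum_mul_cyclotomicClass_of_mem f hx]
  exact sum_sub_mul_shift_eq h4 _ (fun n => by rw [H.cyclotomicClass_add_four]) hf hk

end DingHellesethData

theorem stmt11_general
    (p q : ℕ) (hp : Nat.Prime p) (hq : Nat.Prime q) (hne : p ≠ q)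
    (hqo : Odd q)
    (hgcd : Nat.gcd (p - 1) (q - 1) = 4)
    (e : ℕ) (he : e = (p - 1) * (q - 1) / 4)
    (g h : ℕ)
    (hgp : orderOf (g : ZMod p) = p - 1)
    (hgq : orderOf (g : ZMod q) = q - 1)
    (hhp : (h : ZMod p) = (g : ZMod p))
    (hhq : (h : ZMod q) = 1)
    (D : ℕ → Finset (ZMod (p * q)))
    (hD : ∀ i, D i = (Finset.range (e / 4) ×ˢ Finset.range 4).image
        (fun sj => (g : ZMod (p * q)) ^ (4 * sj.1 + i) * (h : ZMod (p * q)) ^ sj.2))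
    (Pset Qset : Finset (ZMod (p * q)))
    (hP : Pset = (Finset.Icc 1 (q - 1)).image (fun k => ((k * p : ℕ) : ZMod (p * q))))
    (hQ : Qset = (Finset.Icc 1 (p - 1)).image (fun k => ((k * q : ℕ) : ZMod (p * q))))
    (E : ℕ → ZMod 4)
    (hE2 : ∀ u : ℕ, ((u : ZMod (p * q)) ∈ Qset ∨ (u : ZMod (p * q)) = 0) → E u = 2)
    (hE0 : ∀ u : ℕ, (u : ZMod (p * q)) ∈ Pset → E u = 0)
    (hED : ∀ u : ℕ, ∀ i < 4, (u : ZMod (p * q)) ∈ D i → E u = (i : ZMod 4))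
    (ℓ : ℕ) (β : TruncatedWittVector 2 2 (GaloisField 2 ℓ))
    (hβo : orderOf β = p * q)
    (ρ : TruncatedWittVector 2 2 (GaloisField 2 ℓ))
    (hρ : ρ = ∑ i ∈ Finset.Icc (1 : ℕ) 3, ((i : ℕ) : TruncatedWittVector 2 2 (GaloisField 2 ℓ)) * ∑ u ∈ D i, β ^ u.val)
    (hq8 : q % 8 = 1) :
    ∀ u : ℕ,
      2 * (∑ j ∈ Finset.range q, (β ^ u) ^ (j * p))
        + ∑ i ∈ Finset.range 4,
            (ρ - (i : TruncatedWittVector 2 2 (GaloisField 2 ℓ)))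
              * (∑ v ∈ D i, (β ^ u) ^ v.val)
      = (((E u).val : ℕ) : TruncatedWittVector 2 2 (GaloisField 2 ℓ)) := by
  intro u
  obtain ⟨A, hA⟩ : 4 ∣ p - 1 := hgcd ▸ Nat.gcd_dvd_left _ _
  obtain ⟨B, hB⟩ : 4 ∣ q - 1 := hgcd ▸ Nat.gcd_dvd_right _ _
  have H := DingHellesethData.of_natCast hp hq hne hgcd hA hB hgp hgq hhp hhq
  obtain rfl : D = cyclotomicClass (g : ZMod (p * q)) h (A * B) := by
    funext i
    rw [hD, he, hA, hB, Nat.div_div_eq_div_mul, show 4 * A * (4 * B) = A * B * (4 * 4) by ring,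
      Nat.mul_div_cancel _ (by norm_num)]
    rfl
  subst hρ hP hQ
  have : NeZero (p * q) := ⟨(Nat.mul_pos hp.pos hq.pos).ne'⟩
  have h4 : (4 : TruncatedWittVector 2 2 (GaloisField 2 ℓ)) = 0 :=
    TruncatedWittVector.four_eq_zero
  have hB2 : Even B := Nat.even_iff.2 (by omega)
  rw [TruncatedWittVector.two_mul_sum_pow_mul_eq hβo hp.pos hqo]
  simp only [pow_pow_val (hβo ▸ pow_orderOf_eq_one β) u]
  by_cases hqu : q ∣ u
  · rw [H.sum_sub_mul_sum_mul_eq_zero h4 hB2 _ (fun v => β ^ v.val)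
      (.inr (by simpa using (ZMod.natCast_eq_zero_iff u q).2 hqu)), if_pos hqu,
      hE2 u (natCast_mem_image_Icc_mul_or_eq_zero rfl hqu)]
    simp [show (2 : ZMod 4).val = 2 from rfl]
  by_cases hpu : p ∣ u
  · have hE : E u = 0 := hE0 u <|
      (natCast_mem_image_Icc_mul_or_eq_zero (mul_comm q p) hpu).resolve_right
        fun h0 => hqu ((dvd_mul_left q p).trans ((ZMod.natCast_eq_zero_iff u _).1 h0))
    rw [H.sum_sub_mul_sum_mul_eq_zero h4 hB2 _ (fun v => β ^ v.val)
      (.inl (by simpa using (ZMod.natCast_eq_zero_iff u p).2 hpu)), if_neg hqu, hE]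
    simp
  obtain ⟨k, hk, hxk⟩ := H.exists_natCast_mem_cyclotomicClass hp hq hA hB hpu hqu
  rw [H.sum_sub_mul_sum_mul_of_mem h4 (fun v => β ^ v.val)
      (H.sum_sum_cyclotomicClass_pow_val hp hq hA hB hβo) (mem_range.1 hk) hxk, if_neg hqu,
    hED u k (mem_range.1 hk) hxk, ZMod.val_natCast_of_lt (mem_range.1 hk)]
  simp

theorem stmt11
    (p q : ℕ) (hp : Nat.Prime p) (hq : Nat.Prime q) (hne : p ≠ q)
    (hpo : Odd p) (hqo : Odd q)
    (hgcd : Nat.gcd (p - 1) (q - 1) = 4)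
    (e : ℕ) (he : e = (p - 1) * (q - 1) / 4)
    (g h : ℕ)
    (hgp : orderOf (g : ZMod p) = p - 1)
    (hgq : orderOf (g : ZMod q) = q - 1)
    (hhp : (h : ZMod p) = (g : ZMod p))
    (hhq : (h : ZMod q) = 1)
    (D : ℕ → Finset (ZMod (p * q)))
    (hD : ∀ i, D i = (Finset.range (e / 4) ×ˢ Finset.range 4).image
        (fun sj => (g : ZMod (p * q)) ^ (4 * sj.1 + i) * (h : ZMod (p * q)) ^ sj.2))
    (Pset Qset : Finset (ZMod (p * q)))
    (hP : Pset = (Finset.Icc 1 (q - 1)).image (fun k => ((k * p : ℕ) : ZMod (p * q))))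
    (hQ : Qset = (Finset.Icc 1 (p - 1)).image (fun k => ((k * q : ℕ) : ZMod (p * q))))
    (E : ℕ → ZMod 4)
    (hE2 : ∀ u : ℕ, ((u : ZMod (p * q)) ∈ Qset ∨ (u : ZMod (p * q)) = 0) → E u = 2)
    (hE0 : ∀ u : ℕ, (u : ZMod (p * q)) ∈ Pset → E u = 0)
    (hED : ∀ u : ℕ, ∀ i < 4, (u : ZMod (p * q)) ∈ D i → E u = (i : ZMod 4))
    (ℓ : ℕ) (β : TruncatedWittVector 2 2 (GaloisField 2 ℓ))
    (hβu : IsUnit β) (hβo : orderOf β = p * q)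
    (ρ : TruncatedWittVector 2 2 (GaloisField 2 ℓ))
    (hρ : ρ = ∑ i ∈ Finset.Icc (1 : ℕ) 3, ((i : ℕ) : TruncatedWittVector 2 2 (GaloisField 2 ℓ)) * ∑ u ∈ D i, β ^ u.val)
    (hq8 : q % 8 = 1) (hp8 : p % 8 = 5) :
    ∀ u : ℕ,
      2 * (∑ j ∈ Finset.range q, (β ^ u) ^ (j * p))
        + ∑ i ∈ Finset.range 4,
            (ρ - (i : TruncatedWittVector 2 2 (GaloisField 2 ℓ)))
              * (∑ v ∈ D i, (β ^ u) ^ v.val)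
      = (((E u).val : ℕ) : TruncatedWittVector 2 2 (GaloisField 2 ℓ)) :=
  stmt11_general p q hp hq hne hqo hgcd e he g h hgp hgq hhp hhq D hD Pset Qset hP hQ E hE2 hE0 hED
    ℓ β hβo ρ hρ hq8
end

section
/- Suppose q ≡ 1 (mod 8). With H_0 = D_0 ∪ D_2, H_1 = D_1 ∪ D_3 and H_i(x) = ∑_{u ∈ H_i} x^u, one has in GR(4, 4^ℓ): (H_0(β))^2 = (0,0)·H_0(β) + (0,1)·H_1(β), where (0,0) = |(H_0 + 1) ∩ H_0| and (0,1) = |(H_0 + 1) ∩ H_1| are the generalized cyclotomic numbers of order 2 (here H_0 + 1 denotes the set {w + 1 mod pq : w ∈ H_0}, and the cardinalities are mapped into GR(4, 4^ℓ)). -/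
/-!
`H₀ = D₀ ∪ D₂` and `H₁ = D₁ ∪ D₃` are the units of `ℤ/pq` whose residue mod `q` is a quadratic
residue, resp. non-residue: `g` is a non-residue mod `q`, `h ≡ 1 (mod q)`, and every unit is
`g^k h^j` with `k < e`, `j < 4`. So `c H₀ = H₀` for `c ∈ H₀` and `c H₀ = H₁` for `c ∈ H₁`.
With `ψ(x) = β^x`, expanding the square and substituting `v = u w` gives
`H₀(β)² = ∑_{w ∈ H₀} ∑_{u ∈ H₀} ψ((1 + w) u)`, and the inner sum is `H₀(β)` or `H₁(β)` when
`1 + w ∈ H₀` resp. `H₁`. When `1 + w` is not a unit it vanishes: then `(1 + w) u` depends only on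
`u mod p` or only on `u mod q`, and the fibres of `H₀` over these residues have `(q - 1)/2`
resp. `p - 1` elements, both divisible by `4`, which is `0` in `GR(4, 4^ℓ)`.
-/

open Finset

namespace TruncatedWittVector

theorem natCast_pow_eq_zero (p n : ℕ) [Fact p.Prime] (R : Type*) [CommRing R] [CharP R p] :
    (p : TruncatedWittVector p n R) ^ n = 0 := by
  rw [← map_natCast (WittVector.truncate (p := p) (R := R) n), ← map_pow]
  ext i
  rw [WittVector.coeff_truncate, WittVector.coeff_p_pow_eq_zero p R (by omega : (i : ℕ) ≠ n),
    coeff_zero]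

end TruncatedWittVector

theorem pow_eq_pow_of_modEq_orderOf {M : Type*} [Monoid M] {x : M} {n m : ℕ}
    (h : n ≡ m [MOD orderOf x]) : x ^ n = x ^ m := by
  rw [← pow_mod_orderOf, h, pow_mod_orderOf]

section UnitFiber

variable {A M : Type*} [CommMonoid A] [Monoid M]

def unitFiber (κ : A →* M) (ε : M) : Set A := {x | IsUnit x ∧ κ x = ε}

theorem bijOn_mul_unitFiber (κ : A →* M) {c : A} (hc : IsUnit c) (ε : M) :
    Set.BijOn (c * ·) (unitFiber κ ε) (unitFiber κ (κ c * ε)) := by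
  refine ⟨fun x hx => ⟨hc.mul hx.1, by rw [map_mul, hx.2]⟩, hc.mul_right_injective.injOn, ?_⟩
  rintro y ⟨hy, hκy⟩
  refine ⟨↑hc.unit⁻¹ * y, ⟨hc.unit⁻¹.isUnit.mul hy, ?_⟩, ?_⟩
  · rw [map_mul, hκy, ← mul_assoc, ← map_mul, hc.val_inv_mul, map_one, one_mul]
  · simp only [← mul_assoc, hc.mul_val_inv, one_mul]

end UnitFiber

theorem Finset.sum_mul_left_of_bijOn {A R : Type*} [Mul A] [AddCommMonoid R] (f : A → R)
    {s t : Finset A} {c : A} (hc : Set.BijOn (c * ·) s t) :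
    ∑ x ∈ s, f (c * x) = ∑ x ∈ t, f x :=
  sum_nbij (c * ·) hc.mapsTo hc.injOn hc.surjOn fun _ _ => rfl

theorem sq_sum_addChar_eq {A R : Type*} [CommSemiring A] [DecidableEq A] [CommSemiring R]
    (ψ : AddChar A R) (H₀ H₁ : Finset A) (hdisj : Disjoint H₀ H₁)
    (h₀ : ∀ c ∈ H₀, Set.BijOn (c * ·) H₀ H₀) (h₁ : ∀ c ∈ H₁, Set.BijOn (c * ·) H₀ H₁)
    (hzero : ∀ c ∉ H₀ ∪ H₁, ∑ x ∈ H₀, ψ (c * x) = 0) :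
    (∑ x ∈ H₀, ψ x) ^ 2 = #{w ∈ H₀ | w + 1 ∈ H₀} * ∑ x ∈ H₀, ψ x
      + #{w ∈ H₀ | w + 1 ∈ H₁} * ∑ x ∈ H₁, ψ x := by
  have hT : ∀ c, ∑ x ∈ H₀, ψ (c * x) = (if c ∈ H₀ then ∑ x ∈ H₀, ψ x else 0)
      + (if c ∈ H₁ then ∑ x ∈ H₁, ψ x else 0) := by
    intro c
    by_cases c₀ : c ∈ H₀
    · rw [if_pos c₀, if_neg (disjoint_left.mp hdisj c₀), add_zero]
      exact sum_mul_left_of_bijOn _ (h₀ c c₀)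
    by_cases c₁ : c ∈ H₁
    · rw [if_neg c₀, if_pos c₁, zero_add]
      exact sum_mul_left_of_bijOn _ (h₁ c c₁)
    · rw [if_neg c₀, if_neg c₁, add_zero]
      exact hzero c (by simp [c₀, c₁])
  calc (∑ x ∈ H₀, ψ x) ^ 2 = ∑ u ∈ H₀, ∑ w ∈ H₀, ψ ((w + 1) * u) := by
        rw [sq, sum_mul_sum]
        refine sum_congr rfl fun u hu => ?_
        rw [← sum_mul_left_of_bijOn _ (h₀ u hu)]
        refine sum_congr rfl fun w _ => ?_
        rw [← AddChar.map_add_eq_mul, add_mul, one_mul, add_comm, mul_comm]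
    _ = ∑ w ∈ H₀, ∑ u ∈ H₀, ψ ((w + 1) * u) := sum_comm
    _ = _ := by simp only [hT, sum_add_distrib, ← sum_filter, sum_const, nsmul_eq_mul]

theorem Finset.sum_comp_eq_zero_of_dvd_card_fiber {ι κ R : Type*} [DecidableEq κ] [Semiring R]
    (s : Finset ι) (π : ι → κ) (G : κ → R) {m : ℕ} (hm : (m : R) = 0)
    (hdvd : ∀ b, m ∣ #{x ∈ s | π x = b}) : ∑ x ∈ s, G (π x) = 0 := by
  rw [sum_comp]
  refine sum_eq_zero fun b _ => ?_
  obtain ⟨k, hk⟩ := hdvd b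
  rw [hk, nsmul_eq_mul, Nat.cast_mul, hm, zero_mul, zero_mul]

theorem two_mul_card_quadraticChar_eq_one {F : Type*} [Field F] [Fintype F] [DecidableEq F]
    (hF : ringChar F ≠ 2) : 2 * #{a : F | quadraticChar F a = 1} = Fintype.card F - 1 := by
  have hsq : Set.MapsTo (· ^ 2) (univ.erase (0 : F) : Set F)
      (({a | quadraticChar F a = 1} : Finset F) : Set F) := by
    intro a ha
    simpa using quadraticChar_sq_one' (ne_of_mem_erase ha)
  rw [← card_univ, ← card_erase_of_mem (mem_univ 0), card_eq_sum_card_fiberwise hsq,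
    sum_const_nat (m := 2), mul_comm]
  intro b hb
  have hb₁ : quadraticChar F b = 1 := (mem_filter.mp hb).2
  have hroots := quadraticChar_card_sqrts hF b
  rw [hb₁, Set.toFinset_ofPred] at hroots
  have : ({a ∈ univ.erase 0 | a ^ 2 = b} : Finset F) = ({a | a ^ 2 = b} : Finset F) := by
    ext a
    simp only [mem_filter, mem_erase, mem_univ, and_true, true_and, and_iff_right_iff_imp]
    rintro rfl h0
    simp [h0] at hb₁
  rw [this]
  exact_mod_cast hroots

theorem quadraticChar_eq_neg_one_of_orderOf_eq {F : Type*} [Field F] [Fintype F] [DecidableEq F]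
    (hF : ringChar F ≠ 2) {g : F} (hg : orderOf g = Fintype.card F - 1) :
    quadraticChar F g = -1 := by
  have hodd := FiniteField.odd_card_of_char_ne_two hF
  have hcard := Fintype.one_lt_card (α := F)
  have hg₀ : g ≠ 0 := by
    rintro rfl
    rw [orderOf_zero] at hg
    omega
  rw [quadraticChar_neg_one_iff_not_isSquare, FiniteField.isSquare_iff hF hg₀]
  exact pow_ne_one_of_lt_orderOf (by omega) (by omega)

theorem exists_pow_eq_of_orderOf_eq {F : Type*} [Field F] [Fintype F] {g : F}
    (hg : orderOf g = Fintype.card F - 1) {b : F} (hb : b ≠ 0) : ∃ a, g ^ a = b := by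
  have : NeZero (Fintype.card F - 1) := ⟨by have := Fintype.one_lt_card (α := F); omega⟩
  obtain ⟨a, -, ha⟩ := (hg ▸ IsPrimitiveRoot.orderOf g).eq_pow_of_pow_eq_one
    (FiniteField.pow_card_sub_one_eq_one b hb)
  exact ⟨a, ha⟩

theorem Finset.card_image_add_inter {α : Type*} [AddRightCancelSemigroup α] [DecidableEq α]
    (s t : Finset α) (a : α) : #(s.image (· + a) ∩ t) = #{w ∈ s | w + a ∈ t} := by
  rw [← filter_mem_eq_inter, filter_image, card_image_of_injective _ (add_left_injective a)]

section ChineseRemainder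

variable {p q : ℕ} (hpq : p.Coprime q)

theorem card_eq_mul_of_chineseRemainder [NeZero p] [NeZero q] (s : Finset (ZMod (p * q)))
    (P : ZMod p → Prop) (Q : ZMod q → Prop) [DecidablePred P] [DecidablePred Q]
    (hs : ∀ x, x ∈ s ↔ P (ZMod.chineseRemainder hpq x).1 ∧ Q (ZMod.chineseRemainder hpq x).2) :
    #s = #{a | P a} * #{b | Q b} := by
  rw [← card_product]
  exact card_equiv (ZMod.chineseRemainder hpq).toEquiv fun x => by simp [hs]

variable [Fact p.Prime] [Fact q.Prime]

/-- The Legendre symbol of the residue mod `q`; its unit fibres over `1` and `-1` are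
`H₀ = D₀ ∪ D₂` and `H₁ = D₁ ∪ D₃`. -/
def quadraticCharSnd : ZMod (p * q) →* ℤ :=
  (quadraticChar (ZMod q)).toMonoidHom.comp
    ((MonoidHom.snd _ _).comp (ZMod.chineseRemainder hpq).toMonoidHom)

theorem quadraticCharSnd_apply (x : ZMod (p * q)) :
    quadraticCharSnd hpq x = quadraticChar (ZMod q) (ZMod.chineseRemainder hpq x).2 :=
  rfl

theorem mem_unitFiber_quadraticCharSnd {ε : ℤ} (hε : ε ≠ 0) {x : ZMod (p * q)} :
    x ∈ unitFiber (quadraticCharSnd hpq) ε ↔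
      (ZMod.chineseRemainder hpq x).1 ≠ 0 ∧
        quadraticChar (ZMod q) (ZMod.chineseRemainder hpq x).2 = ε := by
  rw [unitFiber, Set.mem_ofPred_eq, ← MulEquiv.isUnit_map (ZMod.chineseRemainder hpq),
    Prod.isUnit_iff, isUnit_iff_ne_zero, isUnit_iff_ne_zero, quadraticCharSnd_apply]
  refine ⟨fun ⟨⟨h₁, _⟩, h⟩ => ⟨h₁, h⟩, fun ⟨h₁, h⟩ => ⟨⟨h₁, fun h₂ => hε ?_⟩, h⟩⟩
  rw [← h, h₂, MulChar.map_zero]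

theorem isUnit_iff_mem_unitFiber_quadraticCharSnd {c : ZMod (p * q)} :
    IsUnit c ↔
      c ∈ unitFiber (quadraticCharSnd hpq) 1 ∪ unitFiber (quadraticCharSnd hpq) (-1) := by
  refine ⟨fun hc => ?_, by rintro (h | h) <;> exact h.1⟩
  have hc₂ : (ZMod.chineseRemainder hpq c).2 ≠ 0 :=
    isUnit_iff_ne_zero.mp (Prod.isUnit_iff.mp ((MulEquiv.isUnit_map _).mpr hc)).2
  rcases quadraticChar_dichotomy hc₂ with h | h
  · exact Or.inl ⟨hc, h⟩
  · exact Or.inr ⟨hc, h⟩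

theorem sum_mul_eq_zero_of_not_isUnit {R : Type*} [Semiring R] (h4 : (4 : R) = 0)
    (hp4 : 4 ∣ p - 1) (hq8 : 8 ∣ q - 1) (f : ZMod (p * q) → R) (H₀ : Finset (ZMod (p * q)))
    (hH₀ : ↑H₀ = unitFiber (quadraticCharSnd hpq) 1) {c : ZMod (p * q)} (hc : ¬IsUnit c) :
    ∑ x ∈ H₀, f (c * x) = 0 := by
  set e := ZMod.chineseRemainder hpq
  have hmem : ∀ x, x ∈ H₀ ↔ (e x).1 ≠ 0 ∧ quadraticChar (ZMod q) (e x).2 = 1 := fun x => by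
    rw [← mem_coe, hH₀, mem_unitFiber_quadraticCharSnd hpq one_ne_zero]
  have h4' : ((4 : ℕ) : R) = 0 := by exact_mod_cast h4
  have hc' : (e c).1 = 0 ∨ (e c).2 = 0 := by
    by_contra! h
    exact hc ((MulEquiv.isUnit_map e).mp
      (Prod.isUnit_iff.mpr ⟨isUnit_iff_ne_zero.mpr h.1, isUnit_iff_ne_zero.mpr h.2⟩))
  rcases hc' with hc₁ | hc₂
  · have hcx : ∀ x, c * x = e.symm (0, (e c).2 * (e x).2) := fun x => by
      rw [e.eq_symm_apply, map_mul, Prod.mul_def, hc₁, zero_mul]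
    rw [sum_congr rfl fun x _ => congrArg f (hcx x)]
    refine sum_comp_eq_zero_of_dvd_card_fiber H₀ (fun x => (e x).2)
      (fun b => f (e.symm (0, (e c).2 * b))) h4' fun b => ?_
    rw [card_eq_mul_of_chineseRemainder hpq _ (· ≠ 0)
      (fun b' => quadraticChar (ZMod q) b' = 1 ∧ b' = b) fun x => by simp only [mem_filter, hmem, and_assoc]; rfl,
      filter_ne', card_erase_of_mem (mem_univ _), card_univ, ZMod.card]
    exact hp4.mul_right _
  · have hcx : ∀ x, c * x = e.symm ((e c).1 * (e x).1, 0) := fun x => by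
      rw [e.eq_symm_apply, map_mul, Prod.mul_def, hc₂, zero_mul]
    rw [sum_congr rfl fun x _ => congrArg f (hcx x)]
    refine sum_comp_eq_zero_of_dvd_card_fiber H₀ (fun x => (e x).1)
      (fun a => f (e.symm ((e c).1 * a, 0))) h4' fun a => ?_
    rw [card_eq_mul_of_chineseRemainder hpq _ (fun a' => a' ≠ 0 ∧ a' = a)
      (fun b => quadraticChar (ZMod q) b = 1) fun x => by simp only [mem_filter, hmem]; tauto]
    have hq2 : ringChar (ZMod q) ≠ 2 := by rw [ZMod.ringChar_zmod_n]; omega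
    have := two_mul_card_quadraticChar_eq_one hq2
    rw [ZMod.card] at this
    exact Dvd.dvd.mul_left (by omega) _

theorem sq_sum_addChar_eq_of_quadraticCharSnd {R : Type*} [CommRing R] (h4 : (4 : R) = 0)
    (hp4 : 4 ∣ p - 1) (hq8 : 8 ∣ q - 1) (ψ : AddChar (ZMod (p * q)) R)
    (H₀ H₁ : Finset (ZMod (p * q))) (hH₀ : ↑H₀ = unitFiber (quadraticCharSnd hpq) 1)
    (hH₁ : ↑H₁ = unitFiber (quadraticCharSnd hpq) (-1)) :
    (∑ x ∈ H₀, ψ x) ^ 2 = #{w ∈ H₀ | w + 1 ∈ H₀} * ∑ x ∈ H₀, ψ x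
      + #{w ∈ H₀ | w + 1 ∈ H₁} * ∑ x ∈ H₁, ψ x := by
  refine sq_sum_addChar_eq ψ H₀ H₁ ?_ (fun c hc => ?_) (fun c hc => ?_) (fun c hc => ?_)
  · rw [← disjoint_coe, hH₀, hH₁]
    exact Set.disjoint_left.mpr fun x hx hx' => by linarith [hx.2.symm.trans hx'.2]
  · rw [← mem_coe, hH₀] at hc
    rw [hH₀]
    simpa [hc.2] using bijOn_mul_unitFiber (quadraticCharSnd hpq) hc.1 1
  · rw [← mem_coe, hH₁] at hc
    rw [hH₀, hH₁]
    simpa [hc.2] using bijOn_mul_unitFiber (quadraticCharSnd hpq) hc.1 1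
  · refine sum_mul_eq_zero_of_not_isUnit hpq h4 hp4 hq8 ψ H₀ hH₀ fun hcu => hc ?_
    rw [mem_union, ← mem_coe, ← mem_coe, hH₀, hH₁]
    exact (isUnit_iff_mem_unitFiber_quadraticCharSnd hpq).mp hcu

end ChineseRemainder

theorem mem_image_pow_mul_pow {M : Type*} [Monoid M] [DecidableEq M] (a b : M) {n m E i : ℕ}
    (hn : n ∣ E) (hi : i < n) {x : M} :
    x ∈ (range (E / n) ×ˢ range m).image (fun sj => a ^ (n * sj.1 + i) * b ^ sj.2) ↔
      ∃ k < E, k % n = i ∧ ∃ j < m, x = a ^ k * b ^ j := by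
  obtain ⟨t, rfl⟩ := hn
  have hn : 0 < n := by omega
  simp only [mem_image, mem_product, mem_range, Prod.exists, Nat.mul_div_cancel_left t hn]
  constructor
  · rintro ⟨s, j, ⟨hs, hj⟩, rfl⟩
    refine ⟨n * s + i, by nlinarith, ?_, j, hj, rfl⟩
    rw [Nat.mul_add_mod, Nat.mod_eq_of_lt hi]
  · rintro ⟨k, hk, rfl, j, hj, rfl⟩
    exact ⟨k / n, j, ⟨Nat.div_lt_of_lt_mul hk, hj⟩, by rw [Nat.div_add_mod]⟩

section PrimitiveRoot

variable {p q : ℕ} [Fact p.Prime] [Fact q.Prime] {g h : ℕ}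

theorem exists_eq_pow_mul_pow (hpq : p.Coprime q) (hgcd : Nat.gcd (p - 1) (q - 1) = 4)
    {E : ℕ} (hE : 0 < E) (hpE : p - 1 ∣ E) (hqE : q - 1 ∣ E)
    (hgp : orderOf (g : ZMod p) = p - 1) (hgq : orderOf (g : ZMod q) = q - 1)
    (hhp : (h : ZMod p) = g) (hhq : (h : ZMod q) = 1) {x : ZMod (p * q)} (hx : IsUnit x) :
    ∃ k < E, ∃ j < 4, x = (g : ZMod (p * q)) ^ k * (h : ZMod (p * q)) ^ j := by
  set e := ZMod.chineseRemainder hpq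
  have hex := Prod.isUnit_iff.mp ((MulEquiv.isUnit_map e).mpr hx)
  obtain ⟨a, ha⟩ := exists_pow_eq_of_orderOf_eq (by rwa [ZMod.card]) (isUnit_iff_ne_zero.mp hex.1)
  obtain ⟨b, hb⟩ := exists_pow_eq_of_orderOf_eq (by rwa [ZMod.card]) (isUnit_iff_ne_zero.mp hex.2)
  have hp4 : 4 ∣ p - 1 := hgcd ▸ Nat.gcd_dvd_left _ _
  have hp : 4 ≤ p - 1 := Nat.le_of_dvd (by have := (Fact.out : p.Prime).two_le; omega) hp4
  -- `j ≡ a - b [MOD 4]` makes the two exponent congruences compatible modulo `gcd = 4`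
  set j := (a + 4 - b % 4) % 4
  have hcompat : b ≡ a + (p - 1) - j [MOD Nat.gcd (q - 1) (p - 1)] := by
    rw [Nat.gcd_comm, hgcd]
    unfold Nat.ModEq
    omega
  obtain ⟨k, hkq, hkp⟩ := Nat.chineseRemainder' hcompat
  refine ⟨k % E, Nat.mod_lt _ hE, j, Nat.mod_lt _ (by norm_num), e.injective (Prod.ext ?_ ?_)⟩
  · simp only [map_mul, map_pow, map_natCast, Prod.fst_mul, Prod.pow_fst, Prod.fst_natCast, hhp,
      ← pow_add, ← ha]
    apply pow_eq_pow_of_modEq_orderOf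
    rw [hgp]
    calc a ≡ a + (p - 1) [MOD p - 1] := Nat.add_modEq_right.symm
      _ = a + (p - 1) - j + j := by omega
      _ ≡ k + j [MOD p - 1] := hkp.symm.add_right j
      _ ≡ k % E + j [MOD p - 1] := ((Nat.mod_modEq k E).symm.of_dvd hpE).add_right j
  · simp only [map_mul, map_pow, map_natCast, Prod.snd_mul, Prod.pow_snd, Prod.snd_natCast, hhq,
      one_pow, mul_one, ← hb]
    apply pow_eq_pow_of_modEq_orderOf
    rw [hgq]
    exact hkq.symm.trans ((Nat.mod_modEq k E).symm.of_dvd hqE)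

theorem quadraticCharSnd_pow_mul_pow (hpq : p.Coprime q) (hq2 : q ≠ 2)
    (hgq : orderOf (g : ZMod q) = q - 1) (hhq : (h : ZMod q) = 1) (k j : ℕ) :
    quadraticCharSnd hpq ((g : ZMod (p * q)) ^ k * (h : ZMod (p * q)) ^ j) = (-1) ^ k := by
  have hg := quadraticChar_eq_neg_one_of_orderOf_eq (F := ZMod q)
    (by rwa [ZMod.ringChar_zmod_n]) (by rwa [ZMod.card])
  rw [quadraticCharSnd_apply]
  simp only [map_mul, map_pow, map_natCast, Prod.snd_mul, Prod.pow_snd, Prod.snd_natCast, hhq,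
    one_pow, mul_one]
  rw [hg]

theorem mem_unitFiber_iff_exists_pow (hpq : p.Coprime q) (hgcd : Nat.gcd (p - 1) (q - 1) = 4)
    (hq2 : q ≠ 2) {E : ℕ} (hE : 0 < E) (hpE : p - 1 ∣ E) (hqE : q - 1 ∣ E)
    (hgp : orderOf (g : ZMod p) = p - 1) (hgq : orderOf (g : ZMod q) = q - 1)
    (hhp : (h : ZMod p) = g) (hhq : (h : ZMod q) = 1) {ε : ℤ} (hε : ε ≠ 0)
    (x : ZMod (p * q)) :
    x ∈ unitFiber (quadraticCharSnd hpq) ε ↔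
      ∃ k < E, (-1) ^ k = ε ∧ ∃ j < 4, x = (g : ZMod (p * q)) ^ k * (h : ZMod (p * q)) ^ j := by
  constructor
  · rintro ⟨hx, hκ⟩
    obtain ⟨k, hk, j, hj, rfl⟩ := exists_eq_pow_mul_pow hpq hgcd hE hpE hqE hgp hgq hhp hhq hx
    exact ⟨k, hk, by rw [← hκ, quadraticCharSnd_pow_mul_pow hpq hq2 hgq hhq], j, hj, rfl⟩
  · rintro ⟨k, -, hk, j, -, rfl⟩
    have hg : (g : ZMod p) ≠ 0 := by
      rintro h0
      rw [h0, orderOf_zero] at hgp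
      have := (Fact.out : p.Prime).two_le
      omega
    rw [mem_unitFiber_quadraticCharSnd hpq hε, ← quadraticCharSnd_apply,
      quadraticCharSnd_pow_mul_pow hpq hq2 hgq hhq, hk]
    simp [hhp, hg]

theorem coe_union_eq_unitFiber (hpq : p.Coprime q) (hgcd : Nat.gcd (p - 1) (q - 1) = 4)
    (hq2 : q ≠ 2) {E : ℕ} (hE : 0 < E) (hpE : p - 1 ∣ E) (hqE : q - 1 ∣ E) (hE4 : 4 ∣ E)
    (hgp : orderOf (g : ZMod p) = p - 1) (hgq : orderOf (g : ZMod q) = q - 1)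
    (hhp : (h : ZMod p) = g) (hhq : (h : ZMod q) = 1) (D : ℕ → Finset (ZMod (p * q)))
    (hD : ∀ i, D i = (range (E / 4) ×ˢ range 4).image
        (fun sj => (g : ZMod (p * q)) ^ (4 * sj.1 + i) * (h : ZMod (p * q)) ^ sj.2))
    {i : ℕ} (hi : i < 2) :
    (↑(D i ∪ D (i + 2)) : Set (ZMod (p * q))) = unitFiber (quadraticCharSnd hpq) ((-1) ^ i) := by
  have key : ∀ k, (-1 : ℤ) ^ k = (-1) ^ i ↔ k % 4 = i ∨ k % 4 = i + 2 := fun k => by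
    rw [neg_one_pow_eq_pow_mod_two k, neg_one_pow_eq_pow_mod_two i]
    rcases Nat.mod_two_eq_zero_or_one k with h | h <;> interval_cases i <;> simp [h] <;> omega
  ext x
  rw [mem_coe, mem_union, hD, hD, mem_image_pow_mul_pow _ _ hE4 (by omega),
    mem_image_pow_mul_pow _ _ hE4 (by omega), mem_unitFiber_iff_exists_pow hpq hgcd hq2 hE hpE hqE
    hgp hgq hhp hhq (pow_ne_zero _ (by norm_num))]
  constructor
  · rintro (⟨k, hk, hki, hj⟩ | ⟨k, hk, hki, hj⟩) <;> exact ⟨k, hk, (key k).mpr (by omega), hj⟩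
  · rintro ⟨k, hk, hki, hj⟩
    rcases (key k).mp hki with h | h
    exacts [Or.inl ⟨k, hk, h, hj⟩, Or.inr ⟨k, hk, h, hj⟩]

end PrimitiveRoot

theorem stmt14_general
    (p q : ℕ) (hp : Nat.Prime p) (hq : Nat.Prime q) (hne : p ≠ q)
    (hgcd : Nat.gcd (p - 1) (q - 1) = 4)
    (e : ℕ) (he : e = (p - 1) * (q - 1) / 4)
    (g h : ℕ)
    (hgp : orderOf (g : ZMod p) = p - 1)
    (hgq : orderOf (g : ZMod q) = q - 1)
    (hhp : (h : ZMod p) = (g : ZMod p))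
    (hhq : (h : ZMod q) = 1)
    (D : ℕ → Finset (ZMod (p * q)))
    (hD : ∀ i, D i = (Finset.range (e / 4) ×ˢ Finset.range 4).image
        (fun sj => (g : ZMod (p * q)) ^ (4 * sj.1 + i) * (h : ZMod (p * q)) ^ sj.2))
    (ℓ : ℕ) (β : TruncatedWittVector 2 2 (GaloisField 2 ℓ))
    (hβo : orderOf β = p * q)
    (hq8 : q % 8 = 1) :
    (∑ u ∈ D 0 ∪ D 2, β ^ u.val) ^ 2
      = ((((D 0 ∪ D 2).image (fun w => w + 1) ∩ (D 0 ∪ D 2)).card : ℕ)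
            : TruncatedWittVector 2 2 (GaloisField 2 ℓ))
          * (∑ u ∈ D 0 ∪ D 2, β ^ u.val)
        + ((((D 0 ∪ D 2).image (fun w => w + 1) ∩ (D 1 ∪ D 3)).card : ℕ)
            : TruncatedWittVector 2 2 (GaloisField 2 ℓ))
          * (∑ u ∈ D 1 ∪ D 3, β ^ u.val) := by
  have := Fact.mk hp
  have := Fact.mk hq
  have hpq : p.Coprime q := (Nat.coprime_primes hp hq).mpr hne
  obtain ⟨P, hP⟩ : 4 ∣ p - 1 := hgcd ▸ Nat.gcd_dvd_left _ _
  obtain ⟨Q, hQ⟩ : 4 ∣ q - 1 := hgcd ▸ Nat.gcd_dvd_right _ _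
  have he' : e = 4 * P * Q := by
    rw [he, hP, hQ, show 4 * P * (4 * Q) = 4 * (4 * P * Q) by ring,
      Nat.mul_div_cancel_left _ (by norm_num)]
  have hPQ : 0 < P * Q := Nat.mul_pos (by have := hp.two_le; omega) (by have := hq.two_le; omega)
  have hH : ∀ i < 2, (↑(D i ∪ D (i + 2)) : Set _) = unitFiber (quadraticCharSnd hpq) ((-1) ^ i) :=
    fun i hi => coe_union_eq_unitFiber hpq hgcd (by omega) (by rw [he', mul_assoc]; omega)
      ⟨Q, by rw [he', hP]⟩ ⟨P, by rw [he', hQ]; ring⟩ ⟨P * Q, by rw [he']; ring⟩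
      hgp hgq hhp hhq D hD hi
  have h4 : (4 : TruncatedWittVector 2 2 (GaloisField 2 ℓ)) = 0 := by
    have := TruncatedWittVector.natCast_pow_eq_zero 2 2 (GaloisField 2 ℓ)
    norm_num at this
    exact this
  rw [card_image_add_inter, card_image_add_inter]
  exact sq_sum_addChar_eq_of_quadraticCharSnd hpq h4 ⟨P, hP⟩ (by omega)
    (AddChar.zmodChar (p * q) (hβo ▸ pow_orderOf_eq_one β)) _ _
    (by simpa using hH 0 (by norm_num)) (by simpa using hH 1 one_lt_two)

theorem stmt14
    (p q : ℕ) (hp : Nat.Prime p) (hq : Nat.Prime q) (hne : p ≠ q)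
    (hpo : Odd p) (hqo : Odd q)
    (hgcd : Nat.gcd (p - 1) (q - 1) = 4)
    (e : ℕ) (he : e = (p - 1) * (q - 1) / 4)
    (g h : ℕ)
    (hgp : orderOf (g : ZMod p) = p - 1)
    (hgq : orderOf (g : ZMod q) = q - 1)
    (hhp : (h : ZMod p) = (g : ZMod p))
    (hhq : (h : ZMod q) = 1)
    (D : ℕ → Finset (ZMod (p * q)))
    (hD : ∀ i, D i = (Finset.range (e / 4) ×ˢ Finset.range 4).image
        (fun sj => (g : ZMod (p * q)) ^ (4 * sj.1 + i) * (h : ZMod (p * q)) ^ sj.2))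
    (ℓ : ℕ) (β : TruncatedWittVector 2 2 (GaloisField 2 ℓ))
    (hβu : IsUnit β) (hβo : orderOf β = p * q)
    (hq8 : q % 8 = 1) :
    (∑ u ∈ D 0 ∪ D 2, β ^ u.val) ^ 2
      = ((((D 0 ∪ D 2).image (fun w => w + 1) ∩ (D 0 ∪ D 2)).card : ℕ)
            : TruncatedWittVector 2 2 (GaloisField 2 ℓ))
          * (∑ u ∈ D 0 ∪ D 2, β ^ u.val)
        + ((((D 0 ∪ D 2).image (fun w => w + 1) ∩ (D 1 ∪ D 3)).card : ℕ)
            : TruncatedWittVector 2 2 (GaloisField 2 ℓ))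
          * (∑ u ∈ D 1 ∪ D 3, β ^ u.val) :=
  stmt14_general p q hp hq hne hgcd e he g h hgp hgq hhp hhq D hD ℓ β hβo hq8
end

section
/- Under the standing hypothesis gcd(p-1, q-1) = 4, the residue 2 mod pq lies in D_0 ∪ D_2 if and only if q ≡ 1 (mod 8) and p ≡ 5 (mod 8). -/
open Subgroup in
lemma aux_pow_surj (r : ℕ) [Fact r.Prime] (g : ZMod r) (hg : orderOf g = r - 1)
    (x : ZMod r) (hx : x ≠ 0) : ∃ n : ℕ, g ^ n = x := by
  have hr2 : 2 ≤ r := (Fact.out : r.Prime).two_le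
  have hg1 : g ^ (r - 1) = 1 := by rw [← hg]; exact pow_orderOf_eq_one g
  have hu : IsUnit g := IsUnit.of_pow_eq_one hg1 (by omega)
  have huo : orderOf hu.unit = r - 1 := by
    rw [← orderOf_units, hu.unit_spec, hg]
  have htop : Subgroup.zpowers hu.unit = ⊤ := by
    apply Subgroup.eq_top_of_card_eq
    rw [Nat.card_zpowers, huo, Nat.card_eq_fintype_card, ZMod.card_units r]
  have hxu : IsUnit x := hx.isUnit
  have hmem : hxu.unit ∈ Subgroup.zpowers hu.unit := htop ▸ Subgroup.mem_top _
  rw [← mem_powers_iff_mem_zpowers] at hmem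
  obtain ⟨n, hn⟩ := hmem
  refine ⟨n, ?_⟩
  have := congrArg (Units.val) hn
  simpa [hu.unit_spec, hxu.unit_spec] using this

theorem stmt16
    (p q : ℕ) (hp : Nat.Prime p) (hq : Nat.Prime q) (hne : p ≠ q)
    (hpo : Odd p) (hqo : Odd q)
    (hgcd : Nat.gcd (p - 1) (q - 1) = 4)
    (e : ℕ) (he : e = (p - 1) * (q - 1) / 4)
    (g h : ℕ)
    (hgp : orderOf (g : ZMod p) = p - 1)
    (hgq : orderOf (g : ZMod q) = q - 1)
    (hhp : (h : ZMod p) = (g : ZMod p))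
    (hhq : (h : ZMod q) = 1)
    (D : ℕ → Finset (ZMod (p * q)))
    (hD : ∀ i, D i = (Finset.range (e / 4) ×ˢ Finset.range 4).image
        (fun sj => (g : ZMod (p * q)) ^ (4 * sj.1 + i) * (h : ZMod (p * q)) ^ sj.2))
 :
    (2 : ZMod (p * q)) ∈ D 0 ∪ D 2 ↔ (q % 8 = 1 ∧ p % 8 = 5) := by
  haveI : Fact p.Prime := ⟨hp⟩
  haveI : Fact q.Prime := ⟨hq⟩
  have hpodd : p % 2 = 1 := Nat.odd_iff.mp hpo
  have hqodd : q % 2 = 1 := Nat.odd_iff.mp hqo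
  have hp2 : 2 ≤ p := hp.two_le
  have hq2 : 2 ≤ q := hq.two_le
  have hpne2 : p ≠ 2 := by omega
  have hqne2 : q ≠ 2 := by omega
  obtain ⟨P, hP⟩ : 4 ∣ p - 1 := hgcd ▸ Nat.gcd_dvd_left _ _
  obtain ⟨Q, hQ⟩ : 4 ∣ q - 1 := hgcd ▸ Nat.gcd_dvd_right _ _
  have hp5 : 5 ≤ p := by omega
  have hq5 : 5 ≤ q := by omega
  have cop : Nat.Coprime P Q := by
    have h1 : Nat.gcd (4 * P) (4 * Q) = 4 * Nat.gcd P Q := Nat.gcd_mul_left 4 P Q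
    rw [hP, hQ, h1] at hgcd
    have : Nat.gcd P Q = 1 := by omega
    exact this
  have hePQ : e / 4 = P * Q := by
    have h1 : (p - 1) * (q - 1) = 4 * (4 * (P * Q)) := by rw [hP, hQ]; ring
    rw [he, h1, Nat.mul_div_cancel_left _ (by norm_num : 0 < 4),
      Nat.mul_div_cancel_left _ (by norm_num : 0 < 4)]
  have copq : Nat.Coprime p q := (Nat.coprime_primes hp hq).mpr hne
  have hgp1 : (g : ZMod p) ^ (p - 1) = 1 := by rw [← hgp]; exact pow_orderOf_eq_one _
  set φp : ZMod (p*q) →+* ZMod p := ZMod.castHom (dvd_mul_right p q) (ZMod p) with hφp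
  set φq : ZMod (p*q) →+* ZMod q := ZMod.castHom (dvd_mul_left q p) (ZMod q) with hφq
  have inj2 : ∀ x y : ZMod (p*q), φp x = φp y → φq x = φq y → x = y := by
    intro x y h1 h2
    apply (ZMod.chineseRemainder copq).injective
    have e1 : ∀ z : ZMod (p*q), (ZMod.chineseRemainder copq) z = (φp z, φq z) := by
      intro z
      simp [hφp, hφq, ZMod.chineseRemainder, ZMod.castHom_apply, Prod.fst_zmod_cast,
        Prod.snd_zmod_cast, Prod.ext_iff]
    rw [e1, e1, h1, h2]
  constructor
  · intro hmem
    have key : ∃ m : ℕ, (2 : ZMod q) = (g : ZMod q) ^ (2 * m) := by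
      rw [Finset.mem_union] at hmem
      rcases hmem with hm | hm
      · rw [hD 0, Finset.mem_image] at hm
        obtain ⟨⟨s, j⟩, _, heq⟩ := hm
        apply_fun φq at heq
        simp only [map_mul, map_pow, map_natCast, hhq, one_pow, mul_one, map_ofNat] at heq
        refine ⟨2 * s, ?_⟩
        rw [← heq]
        congr 1
        omega
      · rw [hD 2, Finset.mem_image] at hm
        obtain ⟨⟨s, j⟩, _, heq⟩ := hm
        apply_fun φq at heq
        simp only [map_mul, map_pow, map_natCast, hhq, one_pow, mul_one, map_ofNat] at heq
        refine ⟨2 * s + 1, ?_⟩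
        rw [← heq]
        congr 1
        omega
    obtain ⟨m, hm⟩ := key
    have hsq : IsSquare (2 : ZMod q) := ⟨(g : ZMod q) ^ m, by rw [hm, ← pow_add, two_mul]⟩
    have h17 := (ZMod.exists_sq_eq_two_iff hqne2).mp hsq
    have hq8 : q % 8 = 1 := by omega
    refine ⟨hq8, ?_⟩
    by_contra hp8
    have hgcd1 : Nat.gcd P Q = 1 := cop
    have h2P : 2 ∣ P := by omega
    have h2Q : 2 ∣ Q := by omega
    have h2g : 2 ∣ Nat.gcd P Q := Nat.dvd_gcd h2P h2Q
    rw [hgcd1] at h2g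
    norm_num at h2g
  · rintro ⟨hq8, hp8⟩
    have hsq : IsSquare (2 : ZMod q) := (ZMod.exists_sq_eq_two_iff hqne2).mpr (Or.inl hq8)
    obtain ⟨y, hy⟩ := hsq
    have h2q0 : (2 : ZMod q) ≠ 0 := by
      have h2 : ((2 : ℕ) : ZMod q) ≠ 0 := by
        rw [Ne, ZMod.natCast_eq_zero_iff]
        intro hdvd
        have := Nat.le_of_dvd (by norm_num) hdvd
        omega
      simpa using h2
    have hy0 : y ≠ 0 := by rintro rfl; rw [mul_zero] at hy; exact h2q0 hy
    obtain ⟨c, hc⟩ := aux_pow_surj q (g : ZMod q) hgq y hy0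
    have hb : (2 : ZMod q) = (g : ZMod q) ^ (2 * c) := by
      rw [hy, ← hc, ← pow_add, two_mul]
    have h2p0 : (2 : ZMod p) ≠ 0 := by
      have h2 : ((2 : ℕ) : ZMod p) ≠ 0 := by
        rw [Ne, ZMod.natCast_eq_zero_iff]
        intro hdvd
        have := Nat.le_of_dvd (by norm_num) hdvd
        omega
      simpa using h2
    obtain ⟨a0, ha0⟩ := aux_pow_surj p (g : ZMod p) hgp (2 : ZMod p) h2p0
    have ha : (g : ZMod p) ^ (a0 + 2 * (p - 1)) = 2 := by
      rw [pow_add, mul_comm 2 (p - 1), pow_mul, hgp1, one_pow, mul_one, ha0]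
    set a := a0 + 2 * (p - 1) with ha_def
    have ha8 : 8 ≤ a := by omega
    obtain ⟨i, hi02, hib⟩ : ∃ i, (i = 0 ∨ i = 2) ∧ 4 * (2 * c / 4) + i = 2 * c :=
      ⟨2 * c % 4, by omega, by omega⟩
    obtain ⟨j, hj4, hjd, hjle⟩ : ∃ j, j < 4 ∧ 4 ∣ a - i - j ∧ i + j ≤ a :=
      ⟨(a + 4 - i) % 4, by omega, by omega, by omega⟩
    set sq' := 2 * c / 4 with hsq'_def
    have hsp : 4 * ((a - i - j) / 4) + (i + j) = a := by omega
    set sp := (a - i - j) / 4 with hsp_def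
    have hP0 : P ≠ 0 := by omega
    have hQ0 : Q ≠ 0 := by omega
    set cr := Nat.chineseRemainder cop sp sq' with hcr
    obtain ⟨hsP, hsQ⟩ := cr.2
    have hlt : cr.1 < P * Q := Nat.chineseRemainder_lt_mul cop sp sq' hP0 hQ0
    set s := cr.1 with hs
    have hmodq : 4 * s + i ≡ 2 * c [MOD q - 1] := by
      rw [hQ, ← hib]
      exact (hsQ.mul_left' 4).add_right i
    have hmodp : 4 * s + i + j ≡ a [MOD p - 1] := by
      rw [hP, ← hsp]
      have := (hsP.mul_left' 4).add_right (i + j)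
      rwa [← add_assoc] at this
    have heq : (g : ZMod (p*q)) ^ (4 * s + i) * (h : ZMod (p*q)) ^ j = 2 := by
      apply inj2
      · simp only [map_mul, map_pow, map_natCast, hhp, map_ofNat]
        rw [← pow_add]
        have hmodp' : (4 * s + i + j) % (p - 1) = a % (p - 1) := hmodp
        have h1 : (g : ZMod p) ^ (4 * s + i + j) = (g : ZMod p) ^ a := by
          rw [← pow_mod_orderOf, hgp, hmodp', ← hgp, pow_mod_orderOf]
        rw [h1, ha]
      · simp only [map_mul, map_pow, map_natCast, hhq, one_pow, mul_one, map_ofNat]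
        have hmodq' : (4 * s + i) % (q - 1) = (2 * c) % (q - 1) := hmodq
        have h1 : (g : ZMod q) ^ (4 * s + i) = (g : ZMod q) ^ (2 * c) := by
          rw [← pow_mod_orderOf, hgq, hmodq', ← hgq, pow_mod_orderOf]
        rw [h1, ← hb]
    have hmemprod : (s, j) ∈ Finset.range (e / 4) ×ˢ Finset.range 4 := by
      rw [Finset.mem_product, Finset.mem_range, Finset.mem_range, hePQ]
      exact ⟨hlt, hj4⟩
    rcases hi02 with rfl | rfl
    · apply Finset.mem_union_left
      rw [hD 0, Finset.mem_image]
      exact ⟨(s, j), hmemprod, heq⟩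
    · apply Finset.mem_union_right
      rw [hD 2, Finset.mem_image]
      exact ⟨(s, j), hmemprod, heq⟩
end
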